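/- arXiv:2403.10577 — 8 statements merged into one kernel-verified Lean document; each statement's English description precedes it below -/
import Mathlib

section
/- The number of Stembridge codes of length n equals n factorial, i.e., |Code_n| = n!. -/
open scoped Classical

/-- The maximum value appearing in the sequence `α`. -/
def codeMax {n : ℕ} (α : Fin n → ℕ) : ℕ := Finset.univ.sup α

/-- `(α, f)` is a Stembridge code of length `n`: every value `k` with
`1 ≤ k ≤ max α` occurs at least twice in `α`, and the mark `f k` satisfies
`1 ≤ f k ≤ (number of occurrences of k) - 1`; `f` vanishes outside `[max α]`. -/
def IsStembridgeCode (n : ℕ) (α : Fin n → ℕ) (f : ℕ → ℕ) : Prop :=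
  (∀ k, 1 ≤ k → k ≤ codeMax α →
      1 ≤ f k ∧ f k + 1 ≤ (Finset.univ.filter (fun i => α i = k)).card) ∧
  (∀ k, k = 0 ∨ codeMax α < k → f k = 0)

/-!
Deleting the entries equal to `1` from a nonzero code and lowering the other nonzero entries
by one leaves a code on the remaining positions; what is lost is the set `B` of positions of
the `1`s (with `#B ≥ 2`) and the mark on `1` (one of `#B - 1` choices). Hence the number `c n`
of codes satisfies `c n = 1 + ∑_b (n choose b) (b - 1) c (n - b)`, and `n!` solves this
recurrence because `(b - 1) n!/b! = n!/(b - 1)! - n!/b!` telescopes.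
-/

open Finset
open scoped Nat

namespace Nat

lemma choose_mul_factorial_sub_eq_succ_mul {n m : ℕ} (hm : m < n) :
    n.choose m * (n - m)! = (m + 1) * (n.choose (m + 1) * (n - (m + 1))!) := by
  have hfac : (n - m)! = (n - m) * (n - (m + 1))! := by
    rw [show n - m = n - (m + 1) + 1 by omega, Nat.factorial_succ]
  rw [hfac, ← mul_assoc, ← Nat.choose_succ_right_eq]
  ring

lemma sum_range_mul_choose_mul_factorial_add {n j : ℕ} (hj : j ≤ n) :
    ∑ m ∈ range j, m * (n.choose (m + 1) * (n - (m + 1))!) + n.choose j * (n - j)! = n ! := by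
  induction j with
  | zero => simp
  | succ j ih =>
    rw [sum_range_succ, ← ih (by omega), choose_mul_factorial_sub_eq_succ_mul hj]
    ring

lemma sum_range_choose_mul_pred_mul_factorial_add_one (n : ℕ) :
    ∑ m ∈ range (n + 1), n.choose m * ((m - 1) * (n - m)!) + 1 = n ! := by
  rw [sum_range_succ']
  simpa [mul_left_comm] using sum_range_mul_choose_mul_factorial_add (le_refl n)

end Nat

namespace Stembridge

def bump (v : ℕ) : ℕ := if v = 0 then 0 else v + 1

lemma bump_le (v : ℕ) : bump v ≤ v + 1 := by unfold bump; split <;> omega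

lemma bump_ne_one (v : ℕ) : bump v ≠ 1 := by unfold bump; split <;> omega

lemma bump_eq_add_one_iff {v k : ℕ} (hk : k ≠ 0) : bump v = k + 1 ↔ v = k := by
  unfold bump; split <;> omega

lemma bump_sub_one {v : ℕ} (hv : v ≠ 1) : bump (v - 1) = v := by
  unfold bump; split <;> omega

lemma bump_injective : Function.Injective bump := by
  intro v w h
  unfold bump at h
  split at h <;> split at h <;> omega

section Raise

variable {ι : Type*} {B : Finset ι} {β : {i // i ∉ B} → ℕ}

noncomputable def raise (B : Finset ι) (β : {i // i ∉ B} → ℕ) : ι → ℕ :=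
  fun i => if h : i ∈ B then 1 else bump (β ⟨i, h⟩)

def lower (B : Finset ι) (α : ι → ℕ) : {i // i ∉ B} → ℕ := fun i => α i - 1

def raiseMarks (r : ℕ) (g : ℕ → ℕ) : ℕ → ℕ
  | 0 => 0
  | 1 => r + 1
  | k + 2 => g (k + 1)

def lowerMarks (f : ℕ → ℕ) : ℕ → ℕ
  | 0 => 0
  | k + 1 => f (k + 2)

lemma raise_of_mem {i : ι} (h : i ∈ B) : raise B β i = 1 := by
  simp [raise, h]

lemma raise_of_notMem (j : {i // i ∉ B}) : raise B β j = bump (β j) := by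
  simp [raise, j.2]

lemma raise_eq_one_iff {i : ι} : raise B β i = 1 ↔ i ∈ B := by
  by_cases h : i ∈ B <;> simp [raise, h, bump_ne_one]

lemma raise_ne_zero (hB : B.Nonempty) : raise B β ≠ 0 := by
  obtain ⟨i, hi⟩ := hB
  intro h
  simpa [raise_of_mem hi] using congrFun h i

lemma raise_lower {α : ι → ℕ} (hB : ∀ i, i ∈ B ↔ α i = 1) : raise B (lower B α) = α := by
  funext i
  by_cases h : i ∈ B
  · rw [raise_of_mem h, (hB i).1 h]
  · rw [raise_of_notMem ⟨i, h⟩, lower, bump_sub_one (mt (hB i).2 h)]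

lemma raiseMarks_lowerMarks {f : ℕ → ℕ} (h0 : f 0 = 0) (h1 : f 1 ≠ 0) :
    raiseMarks (f 1 - 1) (lowerMarks f) = f := by
  funext k
  match k with
  | 0 => exact h0.symm
  | 1 => simp only [raiseMarks]; omega
  | k + 2 => rfl

end Raise

variable {ι : Type*} [Fintype ι]

def occ (α : ι → ℕ) (k : ℕ) : ℕ := #{i | α i = k}

/-- `IsStembridgeCode` for sequences indexed by an arbitrary finite type. -/
def IsCode (α : ι → ℕ) (f : ℕ → ℕ) : Prop :=
  (∀ k, 1 ≤ k → k ≤ univ.sup α → 1 ≤ f k ∧ f k + 1 ≤ occ α k) ∧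
  (∀ k, k = 0 ∨ univ.sup α < k → f k = 0)

variable (ι) in
abbrev Code : Type _ := {p : (ι → ℕ) × (ℕ → ℕ) // IsCode p.1 p.2}

lemma isCode_zero : IsCode (0 : ι → ℕ) 0 := by
  refine ⟨fun k hk hkM => ?_, fun _ _ => rfl⟩
  rw [show univ.sup (0 : ι → ℕ) = 0 from sup_bot _] at hkM
  omega

section Raise

variable {B : Finset ι} {β : {i // i ∉ B} → ℕ}

lemma occ_raise (k : ℕ) :
    occ (raise B β) k = (if 1 = k then #B else 0) + #{j | bump (β j) = k} := by
  simp only [occ, card_filter]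
  rw [← Fintype.sum_subtype_add_sum_subtype (· ∈ B)]
  simp only [raise_of_notMem]
  congr 1
  simp only [fun i : {i // i ∈ B} => raise_of_mem (β := β) i.2]
  split_ifs <;> simp

lemma occ_raise_one : occ (raise B β) 1 = #B := by
  simp [occ_raise, bump_ne_one]

lemma occ_raise_add_one {k : ℕ} (hk : k ≠ 0) : occ (raise B β) (k + 1) = occ β k := by
  simp only [occ_raise, bump_eq_add_one_iff hk]
  simp [hk, occ]

lemma sup_raise (hB : B.Nonempty) : univ.sup (raise B β) = univ.sup β + 1 := by
  refine le_antisymm (Finset.sup_le fun i _ => ?_) ?_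
  · by_cases h : i ∈ B
    · simp [raise_of_mem h]
    · rw [raise_of_notMem ⟨i, h⟩]
      exact (bump_le _).trans (by grw [le_sup (f := β) (mem_univ _)])
  · rcases (univ.sup β).eq_zero_or_pos with h0 | hpos
    · obtain ⟨i, hi⟩ := hB
      have := le_sup (f := raise B β) (mem_univ i)
      rw [raise_of_mem hi] at this
      omega
    · have : Nonempty {i // i ∉ B} := by
        by_contra! h
        simp at hpos
      obtain ⟨j, -, hj⟩ := exists_mem_eq_sup (univ : Finset {i // i ∉ B}) univ_nonempty β
      have := le_sup (f := raise B β) (mem_univ (j : ι))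
      rw [raise_of_notMem, bump, if_neg (by omega)] at this
      omega

lemma isCode_raise_iff {r : ℕ} {g : ℕ → ℕ} (hB : B.Nonempty) (hg : g 0 = 0) :
    IsCode (raise B β) (raiseMarks r g) ↔ r + 2 ≤ #B ∧ IsCode β g := by
  unfold IsCode
  rw [sup_raise hB]
  constructor
  · rintro ⟨hle, hzero⟩
    refine ⟨?_, fun k hk hkM => ?_, fun k hk => ?_⟩
    · have := (hle 1 le_rfl (by omega)).2
      simp only [raiseMarks, occ_raise_one] at this
      omega
    · obtain ⟨k, rfl⟩ : ∃ j, k = j + 1 := ⟨k - 1, by omega⟩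
      simpa [raiseMarks, occ_raise_add_one] using hle (k + 2) (by omega) (by omega)
    · rcases k with _ | k
      · exact hg
      · simpa [raiseMarks] using hzero (k + 2) (by omega)
  · rintro ⟨hr, hle, hzero⟩
    refine ⟨fun k hk hkM => ?_, fun k hk => ?_⟩
    · match k, hk with
      | 1, _ => simp only [raiseMarks, occ_raise_one]; omega
      | k + 2, _ =>
        simpa [raiseMarks, occ_raise_add_one] using hle (k + 1) (by omega) (by omega)
    · match k, hk with
      | 0, _ => rfl
      | 1, hk => omega
      | k + 2, hk => exact hzero (k + 1) (by omega)

end Raise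

/-- The inverse of deleting the `1`s. `Fin (#B - 1)` is empty when `#B ≤ 1`, so no
cardinality constraint on `B` is needed. -/
noncomputable def assemble : Option (Σ B : Finset ι, Fin (#B - 1) × Code {i // i ∉ B}) → Code ι
  | none => ⟨0, isCode_zero⟩
  | some ⟨B, r, ⟨(β, g), hc⟩⟩ =>
    ⟨(raise B β, raiseMarks r g),
      (isCode_raise_iff (card_pos.1 (by have := r.pos; omega)) (hc.2 0 (Or.inl rfl))).2
        ⟨by have := r.isLt; omega, hc⟩⟩

lemma assemble_injective : Function.Injective (assemble (ι := ι)) := by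
  rintro (_ | ⟨B, r, ⟨β, g⟩, hc⟩) (_ | ⟨B', r', ⟨β', g'⟩, hc'⟩) h
  · rfl
  · exact absurd (congrArg (·.1.1) h).symm (raise_ne_zero (card_pos.1 (by have := r'.pos; omega)))
  · exact absurd (congrArg (·.1.1) h) (raise_ne_zero (card_pos.1 (by have := r.pos; omega)))
  · have hα : raise B β = raise B' β' := congrArg (·.1.1) h
    have hf : raiseMarks r g = raiseMarks r' g' := congrArg (·.1.2) h
    obtain rfl : B = B' := by
      ext i
      rw [← raise_eq_one_iff (β := β), hα, raise_eq_one_iff]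
    obtain rfl : r = r' := Fin.ext (by simpa [raiseMarks] using congrFun hf 1)
    obtain rfl : β = β' := funext fun j => bump_injective <| by
      rw [← raise_of_notMem, hα, raise_of_notMem]
    obtain rfl : g = g' := funext fun k => by
      rcases k with _ | k
      · exact (hc.2 0 (Or.inl rfl)).trans (hc'.2 0 (Or.inl rfl)).symm
      · exact congrFun hf (k + 2)
    rfl

lemma assemble_surjective : Function.Surjective (assemble (ι := ι)) := by
  rintro ⟨⟨α, f⟩, hc⟩
  by_cases hα : α = 0
  · subst hα
    have hf : f = 0 := funext fun k => hc.2 k <| by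
      rw [show univ.sup (0 : ι → ℕ) = 0 from sup_bot _]
      omega
    exact ⟨none, by subst hf; rfl⟩
  obtain ⟨i, hi⟩ := Function.ne_iff.1 hα
  have hmax : 1 ≤ univ.sup α := (Nat.one_le_iff_ne_zero.2 hi).trans (le_sup (mem_univ i))
  obtain ⟨hf1, hocc⟩ : 1 ≤ f 1 ∧ f 1 + 1 ≤ occ α 1 := hc.1 1 le_rfl hmax
  set B : Finset ι := {i | α i = 1} with hBdef
  have hB : ∀ i, i ∈ B ↔ α i = 1 := by simp [hBdef]
  have hcard : #B = occ α 1 := rfl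
  have hmarks : raiseMarks (f 1 - 1) (lowerMarks f) = f :=
    raiseMarks_lowerMarks (hc.2 0 (Or.inl rfl)) (by omega)
  have hcode : IsCode (raise B (lower B α)) (raiseMarks (f 1 - 1) (lowerMarks f)) := by
    rwa [raise_lower hB, hmarks]
  have hlower := ((isCode_raise_iff (card_pos.1 (by omega)) rfl).1 hcode).2
  refine ⟨some ⟨B, ⟨f 1 - 1, by omega⟩, ⟨(lower B α, lowerMarks f), hlower⟩⟩, ?_⟩
  exact Subtype.ext (Prod.ext (raise_lower hB) hmarks)

theorem card_code : Nat.card (Code ι) = (Fintype.card ι)! := by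
  induction hn : Fintype.card ι using Nat.strong_induction_on generalizing ι with
  | _ n ih =>
  have hpiece (B : Finset ι) :
      Finite (Fin (#B - 1) × Code {i // i ∉ B}) ∧
        Nat.card (Fin (#B - 1) × Code {i // i ∉ B}) = (#B - 1) * (n - #B)! := by
    rcases lt_or_ge #B 2 with hB | hB
    · rw [show #B - 1 = 0 by omega]
      exact ⟨inferInstance, by simp⟩
    · have hcard : Fintype.card {i // i ∉ B} = n - #B := by
        rw [Fintype.card_subtype_compl, Fintype.card_coe, hn]
      have hrec := ih _ (by have := card_le_univ B; omega) hcard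
      have : Finite (Code {i // i ∉ B}) := Nat.finite_of_card_ne_zero (by rw [hrec]; positivity)
      exact ⟨inferInstance, by rw [Nat.card_prod, hrec, Nat.card_eq_fintype_card, Fintype.card_fin]⟩
  have := fun B => (hpiece B).1
  rw [← Nat.card_congr (Equiv.ofBijective _ ⟨assemble_injective, assemble_surjective⟩),
    Finite.card_option, Nat.card_sigma]
  simp only [fun B => (hpiece B).2]
  rw [← Nat.sum_range_choose_mul_pred_mul_factorial_add_one, ← powerset_univ,
    sum_powerset_apply_card (fun m => (m - 1) * (n - m)!), card_univ, hn]
  simp only [smul_eq_mul]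

end Stembridge

/-- The number of Stembridge codes of length `n` is `n!`. -/
theorem card_stembridgeCodes (n : ℕ) :
    Nat.card {p : (Fin n → ℕ) × (ℕ → ℕ) // IsStembridgeCode n p.1 p.2} = n.factorial := by
  exact Stembridge.card_code.trans (congrArg Nat.factorial (Fintype.card_fin n))
end

section
/- The map φ sending a monomial x_{F_1}^{a_1}···x_{F_ℓ}^{a_ℓ} in the Feichtner–Yuzvinsky basis FY(B_n) of the Boolean matroid to the marked sequence (α, f) with α_i = j if i ∈ F_j \ F_{j−1} and α_i = 0 if i ∉ F_ℓ, and f(j) = a_j, is a bijection from FY(B_n) to the set Code_n of Stembridge codes of length n; moreover the degree a_1 + ··· + a_ℓ of the monomial equals the index f(1) + ··· + f(ℓ) of the code, and φ is equivariant with respect to the natural actions of the symmetric group S_n permuting ground-set elements. -/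
open scoped Classical

/-- The index of a Stembridge code: the sum of the marks. -/
def codeIndex {n : ℕ} (α : Fin n → ℕ) (f : ℕ → ℕ) : ℕ :=
  ∑ k ∈ Finset.Icc 1 (codeMax α), f k

/-- An element `x_{F_1}^{a_1} ⋯ x_{F_ℓ}^{a_ℓ}` of the Feichtner–Yuzvinsky basis
`FY(B_n)` of the Chow ring of the Boolean matroid: a chain
`∅ = F_0 ⊊ F_1 ⊊ ⋯ ⊊ F_ℓ ⊆ [n]` together with exponents satisfying
`1 ≤ a_i ≤ |F_i| - |F_{i-1}| - 1`. -/
structure FYMonomial (n : ℕ) where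
  len : ℕ
  F : Fin len → Finset (Fin n)
  a : Fin len → ℕ
  chain : ∀ i j : Fin len, i < j → F i ⊂ F j
  a_pos : ∀ i : Fin len, 1 ≤ a i
  a_le_first : ∀ i : Fin len, (i : ℕ) = 0 → a i + 1 ≤ (F i).card
  a_le : ∀ i : Fin len, 0 < (i : ℕ) →
    a i + (F ⟨(i : ℕ) - 1, lt_of_le_of_lt (Nat.sub_le _ _) i.isLt⟩).card + 1 ≤ (F i).card

/-- The degree of an FY-basis monomial. -/
def FYdeg {n : ℕ} (m : FYMonomial n) : ℕ := ∑ i, m.a i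

/-- The map `φ : FY(B_n) → Code_n`: `α_i = j` if `i ∈ F_j \ F_{j-1}` (so `α_i`
is one more than the number of sets of the chain not containing `i`),
`α_i = 0` if `i` is in no `F_j`, and `f j = a_j`. -/
def phiFY {n : ℕ} (m : FYMonomial n) : (Fin n → ℕ) × (ℕ → ℕ) :=
  (fun i => if ∃ j, i ∈ m.F j then
      (Finset.univ.filter (fun j => i ∉ m.F j)).card + 1 else 0,
   fun k => if h : 1 ≤ k ∧ k ≤ m.len then m.a ⟨k - 1, by omega⟩ else 0)

/-- The action of `σ ∈ S_n` on an FY-basis monomial, replacing each `F_i` by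
its image `σ(F_i)`. -/
def permFY {n : ℕ} (σ : Equiv.Perm (Fin n)) (m : FYMonomial n) : FYMonomial n where
  len := m.len
  F := fun j => (m.F j).map σ.toEmbedding
  a := m.a
  chain := fun i j hij => Finset.map_ssubset_map.mpr (m.chain i j hij)
  a_pos := m.a_pos
  a_le_first := fun i hi => by simpa using m.a_le_first i hi
  a_le := fun i hi => by simpa using m.a_le i hi

/-- The action of `σ ∈ S_n` on marked sequences, permuting the positions of
`α`. -/
def permCode {n : ℕ} (σ : Equiv.Perm (Fin n)) (p : (Fin n → ℕ) × (ℕ → ℕ)) :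
    (Fin n → ℕ) × (ℕ → ℕ) :=
  (fun i => p.1 (σ⁻¹ i), p.2)

/-!
Under `φ`, `α i` is the step of the chain at which `i` enters it, so `F_j` is recovered from the
code as the set of positions with `1 ≤ α i ≤ j` (`codeLevelSet α j`), and `|F_j| - |F_{j-1}|` is
the number of occurrences of `j` in `α`. The bounds `1 ≤ a_j ≤ |F_j| - |F_{j-1}| - 1` are thereby
exactly the bounds on the marks of a Stembridge code, and reading the chain off the level sets of
a code inverts `φ`.
-/

open Finset

theorem Fin.mem_iff_lt_card_of_isLowerSet {k : ℕ} {s : Finset (Fin k)}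
    (hs : IsLowerSet (s : Set (Fin k))) (j : Fin k) : j ∈ s ↔ (j : ℕ) < #s := by
  constructor
  · intro hj
    have hsub : Finset.Iic j ⊆ s := fun x hx => hs (Finset.mem_Iic.mp hx) hj
    have := Finset.card_le_card hsub
    rw [Fin.card_Iic] at this
    omega
  · intro hlt
    by_contra hj
    have hsub : s ⊆ Finset.Iio j :=
      fun x hx => Finset.mem_Iio.mpr (lt_of_not_ge fun hjx => hj (hs hjx hx))
    have := Finset.card_le_card hsub
    rw [Fin.card_Iio] at this
    omega

section codeLevelSet

variable {ι : Type*} [Fintype ι] (α : ι → ℕ)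

def codeLevelSet (k : ℕ) : Finset ι := univ.filter fun i => α i ≠ 0 ∧ α i ≤ k

variable {α}

@[simp]
theorem mem_codeLevelSet {k : ℕ} {i : ι} : i ∈ codeLevelSet α k ↔ α i ≠ 0 ∧ α i ≤ k := by
  simp [codeLevelSet]

theorem codeLevelSet_zero : codeLevelSet α 0 = ∅ := by
  ext i; simp only [mem_codeLevelSet, notMem_empty, iff_false]; omega

theorem codeLevelSet_mono : Monotone (codeLevelSet α) := fun _ _ hkl _ => by
  simp only [mem_codeLevelSet]; omega

theorem card_codeLevelSet_succ (k : ℕ) :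
    #(codeLevelSet α (k + 1)) = #(codeLevelSet α k) + #(univ.filter fun i => α i = k + 1) := by
  rw [← card_union_of_disjoint]
  · congr 1; ext i; simp only [mem_union, mem_codeLevelSet, mem_filter, mem_univ, true_and]; omega
  · rw [disjoint_left]; intro i; simp only [mem_codeLevelSet, mem_filter, mem_univ, true_and]; omega

theorem eq_of_codeLevelSet_eq {β : ι → ℕ} {L : ℕ} (hα : ∀ i, α i ≤ L) (hβ : ∀ i, β i ≤ L)
    (h : ∀ k, 1 ≤ k → k ≤ L → codeLevelSet α k = codeLevelSet β k) : α = β := by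
  funext i
  have hlevel : ∀ k, 1 ≤ k → k ≤ L → (α i ≠ 0 ∧ α i ≤ k ↔ β i ≠ 0 ∧ β i ≤ k) := fun k hk1 hkL => by
    rw [← mem_codeLevelSet, ← mem_codeLevelSet, h k hk1 hkL]
  have hαβ := hlevel (α i)
  have hβα := hlevel (β i)
  have := hα i
  have := hβ i
  omega

end codeLevelSet

namespace FYMonomial

variable {n : ℕ} (m : FYMonomial n)

theorem strictMono_F : StrictMono m.F := fun i j hij => m.chain i j hij

theorem mem_F_iff_card_le {i : Fin n} {j : Fin m.len} :
    i ∈ m.F j ↔ #(univ.filter fun j' => i ∉ m.F j') ≤ j := by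
  have hlower : IsLowerSet ((univ.filter fun j' => i ∉ m.F j' : Finset _) : Set (Fin m.len)) :=
    fun _ _ hle hmem => by
      simp only [coe_filter, mem_univ, true_and, Set.mem_ofPred_eq] at hmem ⊢
      exact fun hi => hmem (m.strictMono_F.monotone hle hi)
  rw [← not_lt, ← Fin.mem_iff_lt_card_of_isLowerSet hlower]
  simp

theorem phiFY_fst_le_len (i : Fin n) : (phiFY m).1 i ≤ m.len := by
  simp only [phiFY]
  split_ifs with h
  · obtain ⟨j, hj⟩ := h
    have := m.mem_F_iff_card_le.mp hj
    omega
  · exact Nat.zero_le _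

theorem F_eq_codeLevelSet (j : Fin m.len) : m.F j = codeLevelSet (phiFY m).1 (j + 1) := by
  ext i
  simp only [mem_codeLevelSet, phiFY]
  split_ifs with h
  · rw [m.mem_F_iff_card_le]; omega
  · simp [not_exists.mp h j]

theorem phiFY_snd_succ (j : Fin m.len) : (phiFY m).2 (j + 1) = m.a j := by
  simp [phiFY]

theorem add_one_le_card_phiFY_fst_eq (t : Fin m.len) :
    m.a t + 1 ≤ #(univ.filter fun i => (phiFY m).1 i = t + 1) := by
  have hsucc := card_codeLevelSet_succ (α := (phiFY m).1) t
  rw [← F_eq_codeLevelSet] at hsucc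
  rcases Nat.eq_zero_or_pos t with h0 | hpos
  · have hempty : codeLevelSet (phiFY m).1 t = ∅ := by rw [h0]; exact codeLevelSet_zero
    rw [hempty, card_empty] at hsucc
    have := m.a_le_first t h0
    omega
  · have hprev := m.F_eq_codeLevelSet ⟨t - 1, by omega⟩
    rw [show t - 1 + 1 = (t : ℕ) by omega] at hprev
    have := m.a_le t hpos
    rw [hprev] at this
    omega

theorem codeMax_phiFY : codeMax (phiFY m).1 = m.len := by
  refine le_antisymm (Finset.sup_le fun i _ => m.phiFY_fst_le_len i) ?_
  rcases Nat.eq_zero_or_pos m.len with h0 | hpos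
  · omega
  · have hcard := m.add_one_le_card_phiFY_fst_eq ⟨m.len - 1, by omega⟩
    simp only at hcard
    obtain ⟨i, hi⟩ : (univ.filter fun i => (phiFY m).1 i = m.len - 1 + 1).Nonempty := by
      rw [← card_pos]; omega
    calc m.len = (phiFY m).1 i := by simp only [mem_filter] at hi; omega
      _ ≤ codeMax (phiFY m).1 := le_sup (mem_univ i)

theorem isStembridgeCode_phiFY : IsStembridgeCode n (phiFY m).1 (phiFY m).2 := by
  rw [IsStembridgeCode, codeMax_phiFY]
  refine ⟨fun k hk1 hkL => ?_, fun k hk => ?_⟩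
  · obtain ⟨t, rfl⟩ : ∃ t : Fin m.len, k = t + 1 := ⟨⟨k - 1, by omega⟩, by simp; omega⟩
    rw [phiFY_snd_succ]
    exact ⟨m.a_pos t, m.add_one_le_card_phiFY_fst_eq t⟩
  · simp only [phiFY]
    rw [dif_neg]
    omega

theorem FYdeg_eq_codeIndex : FYdeg m = codeIndex (phiFY m).1 (phiFY m).2 := by
  rw [FYdeg, codeIndex, codeMax_phiFY, ← Ico_add_one_right_eq_Icc, sum_Ico_eq_sum_range,
    Nat.add_sub_cancel, ← Fin.sum_univ_eq_sum_range (fun k => (phiFY m).2 (1 + k))]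
  simp_rw [add_comm 1, phiFY_snd_succ]

theorem ext_of_len_eq {m₁ m₂ : FYMonomial n} (hlen : m₁.len = m₂.len)
    (hF : ∀ j, m₁.F j = m₂.F (Fin.cast hlen j)) (ha : ∀ j, m₁.a j = m₂.a (Fin.cast hlen j)) :
    m₁ = m₂ := by
  obtain ⟨len, F₁, a₁⟩ := m₁
  obtain ⟨_, F₂, a₂⟩ := m₂
  dsimp only at hlen hF ha
  subst hlen
  obtain rfl : F₁ = F₂ := funext hF
  obtain rfl : a₁ = a₂ := funext ha
  rfl

theorem phiFY_injective : Function.Injective (phiFY (n := n)) := by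
  intro m₁ m₂ h
  have hlen : m₁.len = m₂.len := by rw [← codeMax_phiFY, h, codeMax_phiFY]
  refine ext_of_len_eq hlen (fun j => ?_) (fun j => ?_)
  · rw [F_eq_codeLevelSet, F_eq_codeLevelSet, h, Fin.val_cast]
  · rw [← phiFY_snd_succ, ← phiFY_snd_succ, h, Fin.val_cast]

theorem phiFY_permFY (σ : Equiv.Perm (Fin n)) : phiFY (permFY σ m) = permCode σ (phiFY m) := by
  have hmem (i : Fin n) (j : Fin m.len) : i ∈ (m.F j).map σ.toEmbedding ↔ σ⁻¹ i ∈ m.F j :=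
    mem_map_equiv
  simp only [phiFY, permFY, permCode, hmem]
  congr

end FYMonomial

namespace IsStembridgeCode

variable {n : ℕ} {α : Fin n → ℕ} {f : ℕ → ℕ}

theorem exists_eq (h : IsStembridgeCode n α f) {k : ℕ} (hk1 : 1 ≤ k) (hkM : k ≤ codeMax α) :
    ∃ i, α i = k := by
  obtain ⟨i, hi⟩ : (univ.filter fun i => α i = k).Nonempty := by
    rw [← card_pos]; have := h.1 k hk1 hkM; omega
  exact ⟨i, (mem_filter.mp hi).2⟩

theorem add_card_codeLevelSet_lt_card_succ (h : IsStembridgeCode n α f) {k : ℕ}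
    (hkM : k < codeMax α) : f (k + 1) + #(codeLevelSet α k) < #(codeLevelSet α (k + 1)) := by
  have := (h.1 (k + 1) (by omega) hkM).2
  rw [card_codeLevelSet_succ]
  omega

def toFYMonomial (h : IsStembridgeCode n α f) : FYMonomial n where
  len := codeMax α
  F j := codeLevelSet α (j + 1)
  a j := f (j + 1)
  chain i j hij := by
    refine Finset.ssubset_iff_subset_ne.mpr ⟨codeLevelSet_mono (by omega), fun heq => ?_⟩
    obtain ⟨x, hx⟩ := h.exists_eq (k := j + 1) (by omega) j.isLt
    have : x ∈ codeLevelSet α (i + 1) := by rw [heq]; simp [hx]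
    simp only [mem_codeLevelSet, hx] at this
    omega
  a_pos j := (h.1 (j + 1) (by omega) j.isLt).1
  a_le_first j hj := by
    have := h.add_card_codeLevelSet_lt_card_succ (k := 0) (by omega)
    rw [codeLevelSet_zero, card_empty] at this
    simp only [hj]
    omega
  a_le j hj := by
    have := h.add_card_codeLevelSet_lt_card_succ j.isLt
    simp only
    rwa [Nat.sub_add_cancel hj]

theorem phiFY_toFYMonomial (h : IsStembridgeCode n α f) : phiFY h.toFYMonomial = (α, f) := by
  have hlen : h.toFYMonomial.len = codeMax α := rfl
  refine Prod.ext ?_ (funext fun k => ?_)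
  · refine eq_of_codeLevelSet_eq (L := codeMax α)
      h.toFYMonomial.phiFY_fst_le_len (fun i => le_sup (mem_univ i))
      fun k hk1 hkM => ?_
    obtain ⟨j, rfl⟩ : ∃ j : Fin h.toFYMonomial.len, k = j + 1 := ⟨⟨k - 1, by omega⟩, by simp; omega⟩
    exact (h.toFYMonomial.F_eq_codeLevelSet j).symm
  · simp only [phiFY]
    split_ifs with hk
    · simp only [toFYMonomial]; congr 1; omega
    · exact (h.2 k (by omega)).symm

end IsStembridgeCode

/-- `φ` is a bijection from `FY(B_n)` onto the set `Code_n` of Stembridge codes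
of length `n`, the degree of a monomial equals the index of the corresponding
code, and `φ` is `S_n`-equivariant. -/
theorem phiFY_bijection (n : ℕ) :
    Set.BijOn (phiFY (n := n)) Set.univ
      {p : (Fin n → ℕ) × (ℕ → ℕ) | IsStembridgeCode n p.1 p.2} ∧
    (∀ m : FYMonomial n, FYdeg m = codeIndex (phiFY m).1 (phiFY m).2) ∧
    (∀ (σ : Equiv.Perm (Fin n)) (m : FYMonomial n),
      phiFY (permFY σ m) = permCode σ (phiFY m)) := by
  refine ⟨⟨fun m _ => m.isStembridgeCode_phiFY, FYMonomial.phiFY_injective.injOn, ?_⟩,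
    FYMonomial.FYdeg_eq_codeIndex, fun σ m => m.phiFY_permFY σ⟩
  rintro ⟨α, f⟩ hcode
  exact ⟨hcode.toFYMonomial, Set.mem_univ _, hcode.phiFY_toFYMonomial⟩
end

section
/- For any permutation σ ∈ S_n, the sum of the elements of DEX(σ) equals maj(σ) − exc(σ), where DEX(σ) is the descent set of the word σ̄ over the alphabet 1̄ < 2̄ < ··· < n̄ < 1 < 2 < ··· < n obtained from σ by replacing σ_i with σ̄_i whenever σ_i > i. -/
open scoped Classical

/-!
A bar only matters when it falls on exactly one of two adjacent letters. If position `i` is an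
excedance and `i + 1` is not, then `σ(i) > σ(i+1)` is a descent of `σ` but not of `σ̄`; in the
opposite case `σ(i) ≤ i < σ(i+1)` is an ascent of `σ` but a descent of `σ̄`. Hence, with `c` the
excedance indicator, `[i ∈ DEX σ] = [i ∈ DES σ] + c(i+1) - c(i)`, and summing against the
weights `i + 1` the correction telescopes (Abel summation) to `-exc σ`.
-/

/-- The number of excedances of `σ ∈ S_n` (positions `i` with `σ(i) > i`). -/
def excNum {n : ℕ} (σ : Equiv.Perm (Fin n)) : ℕ :=
  (Finset.univ.filter (fun i : Fin n => (i : ℕ) < (σ i : ℕ))).card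

/-- The major index of `σ ∈ S_n`: the sum of the (1-based) descent positions. -/
def majNum {n : ℕ} (σ : Equiv.Perm (Fin n)) : ℕ :=
  ∑ i ∈ (Finset.range n).filter (fun i =>
      ∃ h : i + 1 < n, σ ⟨i + 1, h⟩ < σ ⟨i, Nat.lt_of_succ_lt h⟩), (i + 1)

/-- The letter at position `i` of the barred word `σ̄` over the alphabet
`1̄ < 2̄ < ⋯ < n̄ < 1 < 2 < ⋯ < n`, encoded in `ℤ`: the barred letter `k̄`
becomes `k - (n+1)` and the unbarred letter `k` stays `k`.  Position `i`
carries a bar exactly when it is an excedance, i.e. `σ(i) > i` in 1-based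
terms. -/
def barredVal {n : ℕ} (σ : Equiv.Perm (Fin n)) (i : Fin n) : ℤ :=
  if (i : ℕ) < (σ i : ℕ) then ((σ i : ℕ) + 1 : ℤ) - (n + 1) else ((σ i : ℕ) + 1 : ℤ)

/-- `DEX(σ)`, the set of (1-based) descent positions of the barred word `σ̄`,
recorded as 0-based indices `i` (position `i+1`). -/
def DEXset {n : ℕ} (σ : Equiv.Perm (Fin n)) : Finset ℕ :=
  (Finset.range n).filter (fun i =>
    ∃ h : i + 1 < n, barredVal σ ⟨i + 1, h⟩ < barredVal σ ⟨i, Nat.lt_of_succ_lt h⟩)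

theorem Finset.sum_range_succ_mul_sub {R : Type*} [CommRing R] (f : ℕ → R) (n : ℕ) :
    ∑ i ∈ Finset.range n, ((i : R) + 1) * (f (i + 1) - f i)
      = n * f n - ∑ i ∈ Finset.range n, f i := by
  induction n with
  | zero => simp
  | succ m ih =>
    rw [Finset.sum_range_succ, ih, Finset.sum_range_succ]
    push_cast
    ring

theorem Nat.cast_sum_filter_succ (s : Finset ℕ) (p : ℕ → Prop) [DecidablePred p] :
    ((∑ i ∈ s.filter p, (i + 1) : ℕ) : ℤ) = ∑ i ∈ s, ((i : ℤ) + 1) * if p i then 1 else 0 := by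
  simp [Finset.sum_filter]

noncomputable def excIndicator {n : ℕ} (σ : Equiv.Perm (Fin n)) (i : ℕ) : ℤ :=
  if h : i < n then (if i < (σ ⟨i, h⟩ : ℕ) then 1 else 0) else 0

theorem excIndicator_self {n : ℕ} (σ : Equiv.Perm (Fin n)) : excIndicator σ n = 0 :=
  dif_neg (lt_irrefl n)

theorem excNum_eq_sum_excIndicator {n : ℕ} (σ : Equiv.Perm (Fin n)) :
    (excNum σ : ℤ) = ∑ i ∈ Finset.range n, excIndicator σ i := by
  rw [← Fin.sum_univ_eq_sum_range, excNum, Finset.natCast_card_filter]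
  refine Finset.sum_congr rfl fun i _ => ?_
  rw [excIndicator, dif_pos i.isLt]

theorem barredVal_descent_indicator {n : ℕ} (σ : Equiv.Perm (Fin n)) {i : ℕ} (hi : i + 1 < n) :
    (if barredVal σ ⟨i + 1, hi⟩ < barredVal σ ⟨i, i.lt_of_succ_lt hi⟩ then (1 : ℤ) else 0)
      = (if σ ⟨i + 1, hi⟩ < σ ⟨i, i.lt_of_succ_lt hi⟩ then 1 else 0)
        + excIndicator σ (i + 1) - excIndicator σ i := by
  have hne : (σ ⟨i, i.lt_of_succ_lt hi⟩ : ℕ) ≠ σ ⟨i + 1, hi⟩ := fun h => by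
    simpa using σ.injective (Fin.ext h)
  have := (σ ⟨i, i.lt_of_succ_lt hi⟩).isLt
  have := (σ ⟨i + 1, hi⟩).isLt
  simp only [barredVal, excIndicator, dif_pos hi, dif_pos (i.lt_of_succ_lt hi), Fin.lt_def]
  split_ifs <;> omega

theorem DEXset_indicator {n : ℕ} (σ : Equiv.Perm (Fin n)) {i : ℕ} (hi : i < n) :
    (if ∃ h : i + 1 < n, barredVal σ ⟨i + 1, h⟩ < barredVal σ ⟨i, i.lt_of_succ_lt h⟩
        then (1 : ℤ) else 0)
      = (if ∃ h : i + 1 < n, σ ⟨i + 1, h⟩ < σ ⟨i, i.lt_of_succ_lt h⟩ then 1 else 0)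
        + excIndicator σ (i + 1) - excIndicator σ i := by
  by_cases hlast : i + 1 < n
  · simp only [exists_prop_of_true hlast]
    exact barredVal_descent_indicator σ hlast
  · have hσ := (σ ⟨i, hi⟩).isLt
    simp only [exists_prop_of_false hlast, if_false, excIndicator, dif_neg hlast, dif_pos hi]
    split_ifs <;> omega

/-- For any `σ ∈ S_n`, the sum of the elements of `DEX(σ)` equals
`maj(σ) - exc(σ)`. -/
theorem sum_DEX_eq_maj_sub_exc (n : ℕ) (σ : Equiv.Perm (Fin n)) :
    ((∑ i ∈ DEXset σ, (i + 1) : ℕ) : ℤ) = (majNum σ : ℤ) - (excNum σ : ℤ) := by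
  have abel := Finset.sum_range_succ_mul_sub (excIndicator σ) n
  rw [excIndicator_self, mul_zero, zero_sub] at abel
  rw [DEXset, Nat.cast_sum_filter_succ, majNum, Nat.cast_sum_filter_succ,
    excNum_eq_sum_excIndicator, sub_eq_add_neg, ← abel, ← Finset.sum_add_distrib]
  refine Finset.sum_congr rfl fun i hi => ?_
  rw [DEXset_indicator σ (Finset.mem_range.mp hi)]
  ring
end

section
/- For any permutation σ ∈ S_n, the cardinality of DEX(σ) equals des(σ) if σ(1) = 1 and equals des(σ) − 1 if σ(1) ≠ 1. -/
open scoped Classical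

/-- The number of descents of `σ ∈ S_n`. -/
def desNum {n : ℕ} (σ : Equiv.Perm (Fin n)) : ℕ :=
  ((Finset.range n).filter (fun i =>
    ∃ h : i + 1 < n, σ ⟨i + 1, h⟩ < σ ⟨i, Nat.lt_of_succ_lt h⟩)).card

/-- `|DEX(σ)| = des(σ)` if `σ(1) = 1` and `|DEX(σ)| = des(σ) - 1` otherwise. -/
theorem card_DEX (n : ℕ) (hn : 0 < n) (σ : Equiv.Perm (Fin n)) :
    ((DEXset σ).card : ℤ) =
      if σ ⟨0, hn⟩ = ⟨0, hn⟩ then (desNum σ : ℤ) else (desNum σ : ℤ) - 1 := by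
  classical
  set B : ℕ → ℤ := fun i =>
    if h : i < n then (if (i : ℕ) < (σ ⟨i, h⟩ : ℕ) then 1 else 0) else 0 with hB
  have hBn : B n = 0 := by simp [hB]
  have key : ∀ i ∈ Finset.range n,
      (if (∃ h : i + 1 < n,
          barredVal σ ⟨i + 1, h⟩ < barredVal σ ⟨i, Nat.lt_of_succ_lt h⟩) then (1:ℤ) else 0)
      = (if (∃ h : i + 1 < n, σ ⟨i + 1, h⟩ < σ ⟨i, Nat.lt_of_succ_lt h⟩) then (1:ℤ) else 0)
        - B i + B (i + 1) := by
    intro i hi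
    rw [Finset.mem_range] at hi
    by_cases h : i + 1 < n
    · have hBi : B i = if (i : ℕ) < (σ ⟨i, hi⟩ : ℕ) then (1:ℤ) else 0 := by
        simp [hB, hi]
      have hBi1 : B (i + 1) = if (i + 1 : ℕ) < (σ ⟨i + 1, h⟩ : ℕ) then (1:ℤ) else 0 := by
        simp [hB, h]
      have e1 : (∃ h' : i + 1 < n,
          barredVal σ ⟨i + 1, h'⟩ < barredVal σ ⟨i, Nat.lt_of_succ_lt h'⟩) ↔
          barredVal σ ⟨i + 1, h⟩ < barredVal σ ⟨i, Nat.lt_of_succ_lt h⟩ :=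
        ⟨fun ⟨_, x⟩ => x, fun x => ⟨h, x⟩⟩
      have e2 : (∃ h' : i + 1 < n, σ ⟨i + 1, h'⟩ < σ ⟨i, Nat.lt_of_succ_lt h'⟩) ↔
          (σ ⟨i + 1, h⟩ : ℕ) < (σ ⟨i, hi⟩ : ℕ) := by
        constructor
        · rintro ⟨h', x⟩; exact x
        · intro x; exact ⟨h, x⟩
      have hne : (σ ⟨i, hi⟩ : ℕ) ≠ (σ ⟨i + 1, h⟩ : ℕ) := by
        intro e
        have : (⟨i, hi⟩ : Fin n) = ⟨i + 1, h⟩ := σ.injective (Fin.ext e)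
        simp [Fin.ext_iff] at this
      have ha : (σ ⟨i, hi⟩ : ℕ) < n := (σ ⟨i, hi⟩).isLt
      have hc : (σ ⟨i + 1, h⟩ : ℕ) < n := (σ ⟨i + 1, h⟩).isLt
      have hbv : ∀ j : Fin n, barredVal σ j =
          if (j : ℕ) < (σ j : ℕ) then ((σ j : ℕ) + 1 : ℤ) - (n + 1)
          else ((σ j : ℕ) + 1 : ℤ) := fun j => rfl
      rw [hBi, hBi1]
      simp only [e1, e2]
      simp only [hbv, Fin.val_mk]
      split_ifs <;> push_cast at * <;> omega
    · have h1 : i + 1 = n := by omega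
      have hBi : B i = 0 := by
        have hlt : (σ ⟨i, hi⟩ : ℕ) < n := (σ ⟨i, hi⟩).isLt
        simp only [hB, dif_pos hi]
        rw [if_neg]
        omega
      have hBi1 : B (i + 1) = 0 := by rw [h1]; exact hBn
      simp [h, hBi, hBi1]
  have hDexCard : ((DEXset σ).card : ℤ) = ∑ i ∈ Finset.range n,
      (if (∃ h : i + 1 < n,
          barredVal σ ⟨i + 1, h⟩ < barredVal σ ⟨i, Nat.lt_of_succ_lt h⟩) then (1:ℤ) else 0) := by
    rw [DEXset, Finset.card_filter, Nat.cast_sum]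
    simp
  have hDesCard : ((desNum σ : ℤ)) = ∑ i ∈ Finset.range n,
      (if (∃ h : i + 1 < n, σ ⟨i + 1, h⟩ < σ ⟨i, Nat.lt_of_succ_lt h⟩) then (1:ℤ) else 0) := by
    rw [desNum, Finset.card_filter, Nat.cast_sum]
    simp
  have hsum : ((DEXset σ).card : ℤ) = (desNum σ : ℤ) - B 0 := by
    rw [hDexCard, Finset.sum_congr rfl key]
    rw [Finset.sum_add_distrib, Finset.sum_sub_distrib, ← hDesCard]
    have hshift : (∑ i ∈ Finset.range n, B (i + 1)) =
        (∑ i ∈ Finset.range n, B i) + B n - B 0 := by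
      have := Finset.sum_range_succ' B n
      rw [Finset.sum_range_succ] at this
      linarith
    rw [hshift, hBn]
    ring
  have hB0 : B 0 = if σ ⟨0, hn⟩ = ⟨0, hn⟩ then 0 else 1 := by
    simp only [hB, dif_pos hn]
    by_cases hσ : σ ⟨0, hn⟩ = ⟨0, hn⟩
    · simp [hσ]
    · rw [if_pos, if_neg hσ]
      have : (σ ⟨0, hn⟩ : ℕ) ≠ 0 := by
        intro e
        exact hσ (Fin.ext e)
      omega
  rw [hsum, hB0]
  split_ifs <;> ring
end

section
/- The statistics exc and des are equidistributed over S_n: for every j, the number of permutations of [n] with exactly j excedances equals the number of permutations of [n] with exactly j descents. -/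
open scoped Classical

/-!
Both statistics satisfy the Eulerian recurrence, witnessed by two ways of building a permutation
of `[n+1]` from one of `[n]` and a position `p`. Inserting `n+1` after `p` in the cycle notation of
`σ` creates one new excedance unless `p` is already an excedance or `p = n+1`; inserting `n+1`
into slot `p` of the one-line notation creates one new descent unless the slot sits inside a
descent or at the end. In both cases exactly `k + 1` of the `n + 1` positions keep the statistic
at its value `k`, and the others raise it by one, so the two distributions agree by induction.
-/

open Finset Equiv

def eulerFiber (N k : ℕ) : Multiset ℕ :=
  Multiset.replicate (k + 1) k + Multiset.replicate (N - (k + 1)) (k + 1)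

theorem map_univ_eq_eulerFiber {β : Type*} [Fintype β] (g : β → ℕ) (k : ℕ)
    (hg : ∀ b, g b = k ∨ g b = k + 1) (hk : #{b | g b = k} = k + 1) :
    univ.val.map g = eulerFiber (Fintype.card β) k := by
  have hk' : #{b | g b = k + 1} = Fintype.card β - (k + 1) := by
    rw [← card_univ, ← card_filter_add_card_filter_not (s := univ) (fun b => g b = k), hk,
      Nat.add_sub_cancel_left]
    refine congrArg card (filter_congr fun b _ => ?_)
    rcases hg b with h | h <;> simp [h]
  ext a
  rw [Multiset.count_map, eulerFiber, Multiset.count_add, Multiset.count_replicate,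
    Multiset.count_replicate, ← filter_val, ← card_def]
  simp_rw [eq_comm (a := a)]
  by_cases ha : k = a
  · subst ha; simp [hk]
  by_cases ha' : k + 1 = a
  · subst ha'; simp [hk']
  · rw [if_neg ha, if_neg ha', filter_false_of_mem]
    · rfl
    · intro b _ hb; rcases hg b with h | h <;> omega

theorem map_univ_eq_bind_of_prod_equiv {α β γ δ M : Type*} [Fintype α] [Fintype β] [Fintype γ]
    (e : α × β ≃ γ) (s : α → δ) (t : γ → M) (F : δ → Multiset M)
    (h : ∀ a, univ.val.map (fun b => t (e (a, b))) = F (s a)) :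
    univ.val.map t = (univ.val.map s).bind F := by
  rw [← Multiset.map_univ_val_equiv e, Multiset.map_map, ← univ_product_univ, product_val,
    SProd.sprod, Multiset.instSProd]
  simp only [Multiset.product, Multiset.map_bind, Multiset.bind_map, Multiset.map_map]
  exact congrArg _ (funext h)

section insertAt

variable {α : Type*} {p i : ℕ} {x : α} {f : ℕ → α}

def insertAt (p : ℕ) (x : α) (f : ℕ → α) (i : ℕ) : α :=
  if i < p then f i else if i = p then x else f (i - 1)

theorem insertAt_of_lt (h : i < p) : insertAt p x f i = f i := if_pos h

@[simp] theorem insertAt_self : insertAt p x f p = x := by simp [insertAt]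

theorem insertAt_succ_of_le (h : p ≤ i) : insertAt p x f (i + 1) = f i := by
  simp [insertAt, show ¬ i + 1 < p by omega, show i + 1 ≠ p by omega]

end insertAt

section descentCount

variable {α : Type*} [LinearOrder α]

/-- The number of descents of the word `f 0, f 1, …, f m` of length `m + 1`. -/
def descentCount (f : ℕ → α) (m : ℕ) : ℕ := ∑ i ∈ range m, if f (i + 1) < f i then 1 else 0

theorem descentCount_succ (f : ℕ → α) (m : ℕ) :
    descentCount f (m + 1) = descentCount f m + if f (m + 1) < f m then 1 else 0 :=
  sum_range_succ _ _

theorem descentCount_congr {f g : ℕ → α} {m : ℕ} (h : ∀ i ≤ m, f i = g i) :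
    descentCount f m = descentCount g m :=
  sum_congr rfl fun i hi => by
    rw [h i (by grind), h (i + 1) (by grind)]

theorem descentCount_insertAt (f : ℕ → α) {x : α} {p n : ℕ} (hp : p ≤ n)
    (hx : ∀ i < n, f i < x) :
    descentCount (insertAt p x f) n + (if 0 < p ∧ p < n ∧ f p < f (p - 1) then 1 else 0) =
      descentCount f (n - 1) + if p < n then 1 else 0 := by
  induction n, hp using Nat.le_induction with
  | base =>
    suffices descentCount (insertAt p x f) p = descentCount f (p - 1) by simpa
    rcases p with _ | q
    · rfl
    · rw [descentCount_succ, descentCount_congr fun i hi => insertAt_of_lt (by omega),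
        insertAt_self, insertAt_of_lt (by omega), if_neg (not_lt.2 (hx q (by omega)).le)]
      rfl
  | succ n hpn ih =>
    specialize ih fun i hi => hx i (by omega)
    rw [descentCount_succ (insertAt p x f)]
    rcases hpn.eq_or_lt with rfl | hlt
    · rw [insertAt_succ_of_le le_rfl, insertAt_self, if_pos (hx p (by omega))]
      rcases p with _ | q
      · simp_all [descentCount]
      · simp only [Nat.add_sub_cancel, descentCount_succ f] at ih ⊢
        grind
    · obtain ⟨m, rfl⟩ : ∃ m, n = m + 1 := ⟨n - 1, by omega⟩
      rw [insertAt_succ_of_le (by omega), insertAt_succ_of_le (by omega)]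
      simp only [Nat.add_sub_cancel, descentCount_succ f] at ih ⊢
      grind

theorem sum_range_descentSlot (f : ℕ → α) (n : ℕ) :
    ∑ p ∈ range (n + 1), (if p = n ∨ (0 < p ∧ p < n ∧ f p < f (p - 1)) then 1 else 0) =
      descentCount f (n - 1) + 1 := by
  rw [sum_range_succ, if_pos (.inl rfl)]
  congr 1
  rcases n with _ | m
  · rfl
  · rw [sum_range_succ', if_neg (by simp), add_zero, Nat.add_sub_cancel]
    refine sum_congr rfl fun i hi => ?_
    simp [mem_range.1 hi, (mem_range.1 hi).ne]

end descentCount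

section extendLast

variable {n : ℕ}

def extendLast (σ : Perm (Fin n)) : Perm (Fin (n + 1)) where
  toFun := Fin.lastCases (Fin.last n) fun i => (σ i).castSucc
  invFun := Fin.lastCases (Fin.last n) fun i => (σ⁻¹ i).castSucc
  left_inv i := by induction i using Fin.lastCases <;> simp
  right_inv i := by induction i using Fin.lastCases <;> simp

@[simp] theorem extendLast_last (σ : Perm (Fin n)) : extendLast σ (Fin.last n) = Fin.last n := by
  simp [extendLast]

@[simp] theorem extendLast_castSucc (σ : Perm (Fin n)) (i : Fin n) :
    extendLast σ i.castSucc = (σ i).castSucc := by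
  simp [extendLast]

theorem extendLast_injective : Function.Injective (extendLast (n := n)) := fun σ τ h =>
  Perm.ext fun i => Fin.castSucc_injective _ <| by
    rw [← extendLast_castSucc, ← extendLast_castSucc, h]

theorem extendLast_eq_last_iff (σ : Perm (Fin n)) {i : Fin (n + 1)} :
    extendLast σ i = Fin.last n ↔ i = Fin.last n :=
  (extendLast σ).injective.eq_iff' (extendLast_last σ)

theorem bijective_extendLast_mul (c : Fin (n + 1) → Perm (Fin (n + 1)))
    (hc : ∀ p, c p p = Fin.last n) :
    Function.Bijective fun x : Perm (Fin n) × Fin (n + 1) => extendLast x.1 * c x.2 := by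
  refine (Fintype.bijective_iff_injective_and_card _).2 ⟨?_, ?_⟩
  · rintro ⟨σ, p⟩ ⟨τ, q⟩ h
    have hpq : p = q := by
      have hp : (extendLast τ * c q) p = Fin.last n := by simp [← h, hc]
      rw [Perm.mul_apply, extendLast_eq_last_iff, ← hc q] at hp
      exact (c q).injective hp
    subst hpq
    simp only [Prod.mk.injEq, and_true]
    exact extendLast_injective (mul_right_cancel h)
  · simp [Fintype.card_perm, Nat.factorial_succ, mul_comm]

end extendLast

section excedances

variable {n : ℕ}

def excedances (σ : Perm (Fin n)) : Finset (Fin n) := {i | (i : ℕ) < σ i}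

theorem excNum_eq_card_excedances (σ : Perm (Fin n)) : excNum σ = #(excedances σ) := rfl

@[simp] theorem mem_excedances {σ : Perm (Fin n)} {i : Fin n} :
    i ∈ excedances σ ↔ (i : ℕ) < σ i := by
  simp [excedances]

theorem excedances_extendLast (σ : Perm (Fin n)) :
    excedances (extendLast σ) = (excedances σ).map Fin.castSuccEmb := by
  ext i
  induction i using Fin.lastCases <;> simp

theorem excedances_extendLast_mul_swap (σ : Perm (Fin n)) (k : Fin n) :
    excedances (extendLast σ * swap k.castSucc (Fin.last n)) =
      (insert k (excedances σ)).map Fin.castSuccEmb := by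
  ext i
  induction i using Fin.lastCases with
  | last => simp [swap_apply_right, (Fin.castSucc_lt_last k).ne']
  | cast i =>
    by_cases hik : i = k
    · simp [hik, swap_apply_left]
    · simp [hik, swap_apply_of_ne_of_ne, Fin.castSucc_ne_last]

theorem excNum_extendLast (σ : Perm (Fin n)) : excNum (extendLast σ) = excNum σ := by
  simp [excNum_eq_card_excedances, excedances_extendLast]

theorem excNum_extendLast_mul_swap (σ : Perm (Fin n)) (k : Fin n) :
    excNum (extendLast σ * swap k.castSucc (Fin.last n)) + (if (k : ℕ) < σ k then 1 else 0) =
      excNum σ + 1 := by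
  simp only [excNum_eq_card_excedances, excedances_extendLast_mul_swap, card_map,
    card_insert_eq_ite, mem_excedances]
  split_ifs <;> omega

theorem map_excNum_extendLast_mul_swap (σ : Perm (Fin n)) :
    univ.val.map (fun p => excNum (extendLast σ * swap p (Fin.last n))) =
      eulerFiber (n + 1) (excNum σ) := by
  have key := excNum_extendLast_mul_swap σ
  have hlast : excNum (extendLast σ * swap (Fin.last n) (Fin.last n)) = excNum σ := by
    rw [swap_self, ← Perm.one_def, mul_one, excNum_extendLast]
  convert map_univ_eq_eulerFiber _ (excNum σ) (fun p => ?_) ?_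
  · simp
  · induction p using Fin.lastCases with
    | last => exact .inl hlast
    | cast k => have := key k; split_ifs at this <;> omega
  · rw [card_filter, Fin.sum_univ_castSucc, if_pos hlast]
    conv_rhs => rw [excNum, card_filter]
    congr 1
    refine sum_congr rfl fun k _ => ?_
    have := key k
    split_ifs at this ⊢ <;> omega

theorem map_excNum_succ (n : ℕ) :
    univ.val.map (excNum (n := n + 1)) =
      (univ.val.map (excNum (n := n))).bind (eulerFiber (n + 1)) :=
  map_univ_eq_bind_of_prod_equiv
    (.ofBijective _ (bijective_extendLast_mul _ fun p => swap_apply_left p _)) _ _ _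
    map_excNum_extendLast_mul_swap

end excedances

section descents

variable {n : ℕ}

def oneLine (σ : Perm (Fin n)) (i : ℕ) : ℕ := if h : i < n then σ ⟨i, h⟩ else 0

theorem desNum_eq_descentCount (σ : Perm (Fin n)) :
    desNum σ = descentCount (oneLine σ) (n - 1) := by
  rw [desNum, card_filter]
  rcases n with _ | m
  · rfl
  · rw [sum_range_succ, descentCount, if_neg (by simp), add_zero, Nat.add_sub_cancel]
    refine sum_congr rfl fun i hi => ?_
    have hi : i < m := mem_range.1 hi
    simp [oneLine, hi, hi.le, ← Fin.val_fin_lt]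

theorem cycleIcc_last_inv_apply_self (p : Fin (n + 1)) :
    (Fin.cycleIcc p (Fin.last n))⁻¹ p = Fin.last n :=
  Perm.inv_eq_iff_eq.2 (Fin.cycleIcc_of_last (Fin.le_last p)).symm

theorem cycleIcc_last_inv_apply_succAbove (p : Fin (n + 1)) (k : Fin n) :
    (Fin.cycleIcc p (Fin.last n))⁻¹ (p.succAbove k) = k.castSucc := by
  rw [Perm.inv_eq_iff_eq, ← Fin.succAbove_last, ← Function.comp_apply (f := Fin.cycleIcc p _),
    Fin.cycleIcc_comp_succAbove _ _ (Fin.le_last p)]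

def insertMax (σ : Perm (Fin n)) (p : Fin (n + 1)) : Perm (Fin (n + 1)) :=
  extendLast σ * (Fin.cycleIcc p (Fin.last n))⁻¹

@[simp] theorem insertMax_self (σ : Perm (Fin n)) (p : Fin (n + 1)) :
    insertMax σ p p = Fin.last n := by
  rw [insertMax, Perm.mul_apply, cycleIcc_last_inv_apply_self, extendLast_last]

@[simp] theorem insertMax_succAbove (σ : Perm (Fin n)) (p : Fin (n + 1)) (k : Fin n) :
    insertMax σ p (p.succAbove k) = (σ k).castSucc := by
  rw [insertMax, Perm.mul_apply, cycleIcc_last_inv_apply_succAbove, extendLast_castSucc]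

theorem oneLine_insertMax (σ : Perm (Fin n)) (p : Fin (n + 1)) {i : ℕ} (hi : i ≤ n) :
    oneLine (insertMax σ p) i = insertAt p n (oneLine σ) i := by
  rcases lt_trichotomy i p with h | rfl | h
  · have hin : i < n := by omega
    have : p.succAbove ⟨i, hin⟩ = ⟨i, by omega⟩ := Fin.succAbove_of_castSucc_lt p _ h
    simp [oneLine, insertAt_of_lt h, hin, Nat.lt_succ_of_le hi, ← this]
  · simp [oneLine, Nat.lt_succ_of_le hi]
  · obtain ⟨j, rfl⟩ : ∃ j, i = j + 1 := ⟨i - 1, by omega⟩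
    have hjn : j < n := by omega
    have : p.succAbove ⟨j, hjn⟩ = ⟨j + 1, by omega⟩ :=
      Fin.succAbove_of_le_castSucc p _ (Fin.le_def.2 (by simp; omega))
    simp [oneLine, insertAt_succ_of_le (show (p : ℕ) ≤ j by omega), hjn, hi, ← this]

theorem desNum_insertMax (σ : Perm (Fin n)) (p : Fin (n + 1)) :
    desNum (insertMax σ p) +
        (if 0 < (p : ℕ) ∧ (p : ℕ) < n ∧ oneLine σ p < oneLine σ (p - 1) then 1 else 0) =
      desNum σ + if (p : ℕ) < n then 1 else 0 := by
  rw [desNum_eq_descentCount, desNum_eq_descentCount, Nat.add_sub_cancel,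
    descentCount_congr fun i => oneLine_insertMax σ p]
  exact descentCount_insertAt _ (Fin.is_le p) fun i hi => by simp [oneLine, hi]

theorem map_desNum_insertMax (σ : Perm (Fin n)) :
    univ.val.map (fun p => desNum (insertMax σ p)) = eulerFiber (n + 1) (desNum σ) := by
  have key := desNum_insertMax σ
  convert map_univ_eq_eulerFiber _ (desNum σ) (fun p => ?_) ?_
  · simp
  · have := key p
    split_ifs at this <;> omega
  · rw [card_filter]
    calc ∑ p : Fin (n + 1), (if desNum (insertMax σ p) = desNum σ then 1 else 0)
        = ∑ p : Fin (n + 1), (if (p : ℕ) = n ∨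
            (0 < (p : ℕ) ∧ (p : ℕ) < n ∧ oneLine σ p < oneLine σ (p - 1)) then 1 else 0) :=
          sum_congr rfl fun p _ => by have := key p; split_ifs at this ⊢ <;> omega
      _ = desNum σ + 1 := by
          rw [Fin.sum_univ_eq_sum_range (fun p => if p = n ∨
            (0 < p ∧ p < n ∧ oneLine σ p < oneLine σ (p - 1)) then 1 else 0),
            sum_range_descentSlot, desNum_eq_descentCount]

theorem map_desNum_succ (n : ℕ) :
    univ.val.map (desNum (n := n + 1)) =
      (univ.val.map (desNum (n := n))).bind (eulerFiber (n + 1)) :=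
  map_univ_eq_bind_of_prod_equiv
    (.ofBijective _ (bijective_extendLast_mul _ cycleIcc_last_inv_apply_self)) _ _ _
    map_desNum_insertMax

end descents

theorem map_excNum_eq_map_desNum (n : ℕ) :
    univ.val.map (excNum (n := n)) = univ.val.map (desNum (n := n)) := by
  induction n with
  | zero => exact Multiset.map_congr rfl fun σ _ => rfl
  | succ n ih => rw [map_excNum_succ, map_desNum_succ, ih]

/-- `exc` and `des` are equidistributed over `S_n`: for each `j`, the number of
permutations of `[n]` with `j` excedances equals the number with `j` descents. -/
theorem exc_des_equidistributed (n j : ℕ) :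
    Nat.card {σ : Equiv.Perm (Fin n) // excNum σ = j} =
      Nat.card {σ : Equiv.Perm (Fin n) // desNum σ = j} := by
  have := congrArg (Multiset.count j) (map_excNum_eq_map_desNum n)
  simp only [Multiset.count_map, ← filter_val, ← card_def] at this
  simpa [Nat.card_eq_fintype_card, Fintype.card_subtype, eq_comm] using this
end

section
/- For a decorated permutation σ ∈ S̃_n with σ ≠ θ: |DEX(σ)| = des(σ) if σ(1) ∈ {0, 1}, and |DEX(σ)| = des(σ) − 1 if σ(1) > 1. -/
open scoped Classical

/-- A decorated permutation of `[n]`, encoded as its one-line word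
`w : Fin n → Fin (n+1)` (position `i` is the 1-based position `i+1`, value `0`
means no value): the nonzero entries are distinct, and every nonzero value is
(the 1-based name of) a position carrying a nonzero entry.  Hence the nonzero
entries form a permutation of their set of positions. -/
def IsDecorated {n : ℕ} (w : Fin n → Fin (n + 1)) : Prop :=
  (∀ i j, (w i : ℕ) ≠ 0 → w i = w j → i = j) ∧
  (∀ i, (w i : ℕ) ≠ 0 → ∃ j : Fin n, (w j : ℕ) ≠ 0 ∧ (w i : ℕ) = (j : ℕ) + 1)

/-- The all-zero decorated permutation `θ`. -/
def isTheta {n : ℕ} (w : Fin n → Fin (n + 1)) : Prop := ∀ i, (w i : ℕ) = 0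

/-- The number of excedances of a decorated permutation (positions `i` with
`w_i > i`, in 1-based terms). -/
def dExc {n : ℕ} (w : Fin n → Fin (n + 1)) : ℕ :=
  (Finset.univ.filter (fun i : Fin n => (i : ℕ) + 1 < (w i : ℕ))).card

/-- `exc(w) + 1`, where `exc(θ) = -1`. -/
noncomputable def dExcP1 {n : ℕ} (w : Fin n → Fin (n + 1)) : ℕ :=
  if isTheta w then 0 else dExc w + 1

/-- The number of descents of the one-line word of a decorated permutation,
with respect to the order `0 < 1 < ⋯ < n`. -/
def dDes {n : ℕ} (w : Fin n → Fin (n + 1)) : ℕ :=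
  ((Finset.range n).filter (fun i =>
    ∃ h : i + 1 < n, (w ⟨i + 1, h⟩ : ℕ) < (w ⟨i, Nat.lt_of_succ_lt h⟩ : ℕ))).card

/-- The major index of the one-line word of a decorated permutation. -/
def dMaj {n : ℕ} (w : Fin n → Fin (n + 1)) : ℕ :=
  ∑ i ∈ (Finset.range n).filter (fun i =>
      ∃ h : i + 1 < n, (w ⟨i + 1, h⟩ : ℕ) < (w ⟨i, Nat.lt_of_succ_lt h⟩ : ℕ)), (i + 1)

/-- The letter at position `i` of the barred word `σ̄` of a decorated
permutation, over the alphabet `1̄ < ⋯ < n̄ < 0 < 1 < ⋯ < n` encoded in `ℤ`. -/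
def dBarred {n : ℕ} (w : Fin n → Fin (n + 1)) (i : Fin n) : ℤ :=
  if (i : ℕ) + 1 < (w i : ℕ) then ((w i : ℕ) : ℤ) - (n + 1) else ((w i : ℕ) : ℤ)

/-- `DEX(σ)` for a decorated permutation: the descent set of the barred word,
as 0-based indices. -/
def dDEXset {n : ℕ} (w : Fin n → Fin (n + 1)) : Finset ℕ :=
  (Finset.range n).filter (fun i =>
    ∃ h : i + 1 < n, dBarred w ⟨i + 1, h⟩ < dBarred w ⟨i, Nat.lt_of_succ_lt h⟩)

/-!
Let `x_i ∈ {0, 1}` record whether position `i` is an excedance (`σ_i > i`). Comparing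
the plain and the barred word at two adjacent positions, barring changes the descent
indicator at `i` by exactly `x_{i+1} - x_i`: barring lowers the letters at excedances below
all unbarred ones and keeps their relative order, and two adjacent nonzero letters are
distinct. Summing over `i` telescopes to `|DEX(σ)| - des(σ) = x_n - x_1 = -x_1`, since the
last position, `n`, is never an excedance.
-/

open Finset

def barLetter (n p a : ℕ) : ℤ := if p < a then (a : ℤ) - (n + 1) else a

lemma ite_barLetter_lt_sub_ite_lt {n p a c : ℕ} (ha : a ≤ n) (hc : c ≤ n)
    (hac : p < a → a ≠ c) :
    ((if barLetter n (p + 1) c < barLetter n p a then 1 else 0) : ℤ)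
        - (if c < a then 1 else 0)
      = (if p + 1 < c then 1 else 0) - (if p < a then 1 else 0) := by
  unfold barLetter
  split_ifs <;> omega

section

variable {n : ℕ} (w : Fin n → Fin (n + 1))

lemma dBarred_eq_barLetter (i : Fin n) : dBarred w i = barLetter n (i + 1) (w i) := rfl

/-- The excedance indicator `x_{i+1}` of a word, extended by `0` beyond its length. -/
def dExcIndicator (i : ℕ) : ℤ :=
  if h : i < n then (if i + 1 < (w ⟨i, h⟩ : ℕ) then 1 else 0) else 0

lemma dExcIndicator_length : dExcIndicator w n = 0 := dif_neg (lt_irrefl n)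

lemma dExcIndicator_of_succ_eq {i : ℕ} (hi : i + 1 = n) : dExcIndicator w i = 0 := by
  have hlt := (w ⟨i, by omega⟩).isLt
  rw [dExcIndicator, dif_pos (by omega), if_neg (by omega)]

lemma dExcIndicator_zero (hn : 0 < n) :
    dExcIndicator w 0 = if 1 < (w ⟨0, hn⟩ : ℕ) then 1 else 0 := dif_pos hn

variable {w}

lemma ite_dBarred_lt_sub_ite_lt (hw : ∀ i j, (w i : ℕ) ≠ 0 → w i = w j → i = j)
    {i : ℕ} (hi : i ∈ range n) :
    ((if ∃ h : i + 1 < n, dBarred w ⟨i + 1, h⟩ < dBarred w ⟨i, Nat.lt_of_succ_lt h⟩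
        then 1 else 0) : ℤ)
      - (if ∃ h : i + 1 < n, (w ⟨i + 1, h⟩ : ℕ) < (w ⟨i, Nat.lt_of_succ_lt h⟩ : ℕ)
        then 1 else 0)
      = dExcIndicator w (i + 1) - dExcIndicator w i := by
  rw [mem_range] at hi
  by_cases h1 : i + 1 < n
  · have hac : i + 1 < (w ⟨i, hi⟩ : ℕ) → (w ⟨i, hi⟩ : ℕ) ≠ w ⟨i + 1, h1⟩ := fun hexc heq => by
      simpa using hw _ _ (by omega) (Fin.ext heq)
    simp only [exists_prop_of_true h1, dExcIndicator, dif_pos h1, dif_pos hi,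
      dBarred_eq_barLetter]
    exact ite_barLetter_lt_sub_ite_lt (Nat.le_of_lt_succ (w _).isLt)
      (Nat.le_of_lt_succ (w _).isLt) hac
  · have hlast : i + 1 = n := by omega
    rw [if_neg fun ⟨h, _⟩ => h1 h, if_neg fun ⟨h, _⟩ => h1 h, hlast, dExcIndicator_length,
      dExcIndicator_of_succ_eq w hlast]

theorem card_dDEXset_sub_dDes (hw : ∀ i j, (w i : ℕ) ≠ 0 → w i = w j → i = j) :
    ((dDEXset w).card : ℤ) - dDes w = - dExcIndicator w 0 := by
  rw [dDEXset, dDes, card_filter, card_filter]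
  push_cast
  rw [← sum_sub_distrib, sum_congr rfl fun i hi => ite_dBarred_lt_sub_ite_lt hw hi,
    sum_range_sub, dExcIndicator_length, zero_sub]

end

theorem card_dDEX_general (n : ℕ) (hn : 0 < n) (w : Fin n → Fin (n + 1))
    (hw : IsDecorated w) :
    ((w ⟨0, hn⟩ : ℕ) ≤ 1 → (dDEXset w).card = dDes w) ∧
    (1 < (w ⟨0, hn⟩ : ℕ) → ((dDEXset w).card : ℤ) = (dDes w : ℤ) - 1) := by
  have h := card_dDEXset_sub_dDes hw.1
  rw [dExcIndicator_zero w hn] at h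
  refine ⟨fun hle => ?_, fun hgt => ?_⟩
  · rw [if_neg (by omega)] at h
    omega
  · rw [if_pos hgt] at h
    omega

/-- For a decorated permutation `σ ∈ S̃_n` with `σ ≠ θ`:
`|DEX(σ)| = des(σ)` if `σ(1) ∈ {0,1}`, and `|DEX(σ)| = des(σ) - 1` if
`σ(1) > 1`. -/
theorem card_dDEX (n : ℕ) (hn : 0 < n) (w : Fin n → Fin (n + 1))
    (hw : IsDecorated w) (hθ : ¬ isTheta w) :
    ((w ⟨0, hn⟩ : ℕ) ≤ 1 → (dDEXset w).card = dDes w) ∧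
    (1 < (w ⟨0, hn⟩ : ℕ) → ((dDEXset w).card : ℤ) = (dDes w : ℤ) - 1) :=
  card_dDEX_general n hn w hw
end

section
/- The poset L̃(M) obtained from a matroid M by taking the disjoint union of the independence complex I(M) (ordered by inclusion) and the lattice of flats L(M) (a starred copy, ordered by inclusion), with the additional cover relations I ⋖ cl_M(I)_* for every independent set I, is a geometric lattice. -/
open scoped Classical

variable {α : Type*}

/-- The underlying set of the poset `L̃(M)`: the disjoint union of the
independence complex of `M` and (a starred copy of) the collection of flats of
`M`. -/
def TildeL (M : Matroid α) : Type _ :=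
  {I : Set α // M.Indep I} ⊕ {F : Set α // M.IsFlat F}

/-- The order on `L̃(M)`: independent sets and flats are each ordered by
inclusion, `I ≤ F_*` iff `I ⊆ F`, and no flat is below an independent set.
(This order relation is generated by the inclusion orders together with the
cover relations `I ⋖ cl_M(I)_*`.) -/
def tleq {M : Matroid α} : TildeL M → TildeL M → Prop
  | .inl I, .inl J => I.1 ⊆ J.1
  | .inl I, .inr F => I.1 ⊆ F.1
  | .inr _, .inl _ => False
  | .inr F, .inr G => F.1 ⊆ G.1

instance {M : Matroid α} : PartialOrder (TildeL M) where
  le := tleq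
  le_refl x := by cases x <;> exact Set.Subset.rfl
  le_trans x y z h1 h2 := by
    rcases x with I | F <;> rcases y with J | G <;> rcases z with K | H <;>
      first
        | exact Set.Subset.trans h1 h2
        | exact h1.elim
        | exact h2.elim
  le_antisymm x y h1 h2 := by
    rcases x with I | F <;> rcases y with J | G
    · exact congrArg Sum.inl (Subtype.ext (Set.Subset.antisymm h1 h2))
    · exact h2.elim
    · exact h1.elim
    · exact congrArg Sum.inr (Subtype.ext (Set.Subset.antisymm h1 h2))

instance {M : Matroid α} : OrderBot (TildeL M) where
  bot := Sum.inl ⟨∅, M.empty_indep⟩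
  bot_le x := by cases x <;> exact Set.empty_subset _

/-
Meets in `L̃(M)` are intersections. The join of two independent sets is their union when that is
independent and otherwise the starred closure of the union; every other join is the starred
closure of the union. The atoms are the nonloops `{e}` and the starred flat of loops, and every
element is the join of the atoms below it. The height of `I` is `|I|` and that of `F_*` is
`r(F) + 1`, so upper semimodularity reduces to submodularity of the rank function; when `I ∪ J`
is dependent, the extra `+ 1` of `cl(I ∪ J)_*` is paid for by `r(I ∪ J) < |I ∪ J|`.
-/

open Set Order

namespace Matroid

variable {M : Matroid α} {X F G : Set α}

lemma IsFlat.inter (hF : M.IsFlat F) (hG : M.IsFlat G) : M.IsFlat (F ∩ G) := by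
  rw [inter_eq_iInter]
  exact .iInter (by rintro (_ | _) <;> assumption)

lemma IsFlat.closure_subset_iff_subset (hF : M.IsFlat F) (hX : X ⊆ M.E) :
    M.closure X ⊆ F ↔ X ⊆ F :=
  ⟨(M.subset_closure X hX).trans, fun hXF ↦ hF.closure ▸ M.closure_subset_closure hXF⟩

lemma IsFlat.eRk_lt_eRk_of_ssubset (hF : M.IsFlat F) (hFG : F ⊂ G) (hGE : G ⊆ M.E)
    (hFfin : M.eRk F ≠ ⊤) : M.eRk F < M.eRk G := by
  obtain ⟨e, heG, heF⟩ := exists_of_ssubset hFG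
  calc M.eRk F < M.eRk F + 1 := (ENat.lt_add_one_iff hFfin).2 le_rfl
    _ = M.eRk (insert e F) := (eRk_insert_eq_add_one ⟨hGE heG, by rwa [hF.closure]⟩).symm
    _ ≤ M.eRk G := M.eRk_mono (insert_subset heG hFG.subset)

lemma eRk_ne_top_of_finite (hX : X.Finite) : M.eRk X ≠ ⊤ :=
  ne_top_of_le_ne_top (encard_ne_top_iff.2 hX) (M.eRk_le_encard X)

lemma eRk_closure_union_add_eRk_inter_le (M : Matroid α) (X Y : Set α) :
    M.eRk (M.closure (X ∪ Y)) + M.eRk (X ∩ Y) ≤ M.eRk X + M.eRk Y := by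
  rw [eRk_closure_eq, add_comm]
  exact M.eRk_inter_add_eRk_union_le X Y

end Matroid

namespace TildeL

variable {M : Matroid α} {I J : {I : Set α // M.Indep I}} {F G : {F : Set α // M.IsFlat F}}

@[match_pattern] abbrev indep (I : {I : Set α // M.Indep I}) : TildeL M := .inl I

@[match_pattern] abbrev flat (F : {F : Set α // M.IsFlat F}) : TildeL M := .inr F

@[simp] lemma indep_le_indep : indep I ≤ indep J ↔ I.1 ⊆ J.1 := Iff.rfl

@[simp] lemma indep_le_flat : indep I ≤ flat F ↔ I.1 ⊆ F.1 := Iff.rfl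

@[simp] lemma not_flat_le_indep : ¬ flat F ≤ indep I := id

@[simp] lemma flat_le_flat : flat F ≤ flat G ↔ F.1 ⊆ G.1 := Iff.rfl

lemma indep_lt_indep : indep I < indep J ↔ I.1 ⊂ J.1 := by
  simp [lt_iff_le_not_ge]

lemma indep_lt_flat : indep I < flat F ↔ I.1 ⊆ F.1 := by
  simp [lt_iff_le_not_ge]

lemma flat_lt_flat : flat F < flat G ↔ F.1 ⊂ G.1 := by
  simp [lt_iff_le_not_ge]

lemma indep_eq_bot : indep I = ⊥ ↔ I.1 = ∅ :=
  Sum.inl_injective.eq_iff.trans Subtype.ext_iff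

@[simp] lemma val_subset_ground_of_indep (I : {I : Set α // M.Indep I}) : I.1 ⊆ M.E :=
  I.2.subset_ground

@[simp] lemma val_subset_ground_of_isFlat (F : {F : Set α // M.IsFlat F}) : F.1 ⊆ M.E :=
  F.2.subset_ground

def meet : TildeL M → TildeL M → TildeL M
  | indep I, indep J => indep ⟨I.1 ∩ J.1, I.2.subset inter_subset_left⟩
  | indep I, flat G => indep ⟨I.1 ∩ G.1, I.2.subset inter_subset_left⟩
  | flat F, indep J => indep ⟨F.1 ∩ J.1, J.2.subset inter_subset_right⟩
  | flat F, flat G => flat ⟨F.1 ∩ G.1, F.2.inter G.2⟩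

noncomputable def join : TildeL M → TildeL M → TildeL M
  | indep I, indep J =>
      if h : M.Indep (I.1 ∪ J.1) then indep ⟨I.1 ∪ J.1, h⟩
      else flat ⟨M.closure (I.1 ∪ J.1), M.isFlat_closure _⟩
  | indep I, flat G => flat ⟨M.closure (I.1 ∪ G.1), M.isFlat_closure _⟩
  | flat F, indep J => flat ⟨M.closure (F.1 ∪ J.1), M.isFlat_closure _⟩
  | flat F, flat G => flat ⟨M.closure (F.1 ∪ G.1), M.isFlat_closure _⟩

lemma le_meet_iff {x y z : TildeL M} : z ≤ meet x y ↔ z ≤ x ∧ z ≤ y := by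
  rcases x with I | F <;> rcases y with J | G <;> rcases z with K | H <;> simp [meet]

lemma join_indep_indep_of_indep (h : M.Indep (I.1 ∪ J.1)) :
    join (indep I) (indep J) = indep ⟨I.1 ∪ J.1, h⟩ :=
  dif_pos h

lemma join_indep_indep_of_not_indep (h : ¬ M.Indep (I.1 ∪ J.1)) :
    join (indep I) (indep J) = flat ⟨M.closure (I.1 ∪ J.1), M.isFlat_closure _⟩ :=
  dif_neg h

lemma join_le_iff {x y z : TildeL M} : join x y ≤ z ↔ x ≤ z ∧ y ≤ z := by
  rcases z with K | H
  · rcases x with I | F <;> rcases y with J | G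
    · by_cases hIJ : M.Indep (I.1 ∪ J.1)
      · simp [join_indep_indep_of_indep hIJ]
      · simpa [join_indep_indep_of_not_indep hIJ] using
          fun hIK hJK ↦ hIJ (K.2.subset (union_subset hIK hJK))
    all_goals simp [join]
  · rcases x with I | F <;> rcases y with J | G
    · by_cases hIJ : M.Indep (I.1 ∪ J.1)
      · simp [join_indep_indep_of_indep hIJ]
      · simp [join_indep_indep_of_not_indep hIJ, H.2.closure_subset_iff_subset]
    all_goals simp [join, H.2.closure_subset_iff_subset]

noncomputable instance : Lattice (TildeL M) where
  sup := join
  le_sup_left _ _ := (join_le_iff.1 le_rfl).1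
  le_sup_right _ _ := (join_le_iff.1 le_rfl).2
  sup_le _ _ _ hx hy := join_le_iff.2 ⟨hx, hy⟩
  inf := meet
  inf_le_left _ _ := (le_meet_iff.1 le_rfl).1
  inf_le_right _ _ := (le_meet_iff.1 le_rfl).2
  le_inf _ _ _ hx hy := le_meet_iff.2 ⟨hx, hy⟩

lemma isAtom_indep_singleton {e : α} (he : M.IsNonloop e) :
    IsAtom (indep ⟨{e}, he.indep⟩ : TildeL M) := by
  refine ⟨fun h ↦ singleton_ne_empty e (indep_eq_bot.1 h), fun b hb ↦ ?_⟩
  rcases b with K | H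
  · exact indep_eq_bot.2 (ssubset_singleton_iff.1 (indep_lt_indep.1 hb))
  · exact absurd hb.le not_flat_le_indep

lemma isAtom_flat_loops : IsAtom (flat ⟨M.loops, M.isFlat_closure ∅⟩ : TildeL M) := by
  refine ⟨Sum.inr_ne_inl, fun b hb ↦ ?_⟩
  rcases b with K | H
  · exact indep_eq_bot.2 (K.2.disjoint_loops.eq_bot_of_le (indep_lt_flat.1 hb))
  · exact absurd H.2.loops_subset (flat_lt_flat.1 hb).not_subset

lemma isLUB_atoms (x : TildeL M) : IsLUB {a | IsAtom a ∧ a ≤ x} x := by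
  refine ⟨fun a ha ↦ ha.2, fun w hw ↦ ?_⟩
  have hnonloop {e : α} (he : M.IsNonloop e) (hex : indep ⟨{e}, he.indep⟩ ≤ x) :
      indep ⟨{e}, he.indep⟩ ≤ w :=
    hw ⟨isAtom_indep_singleton he, hex⟩
  rcases x with I | F
  · have hI {e : α} (he : e ∈ I.1) := hnonloop (I.2.isNonloop_of_mem he) (by simpa using he)
    rcases w with K | H
    · exact fun e he ↦ by simpa using hI he
    · exact fun e he ↦ by simpa using hI he
  · have hloops : flat ⟨M.loops, M.isFlat_closure ∅⟩ ≤ w := hw ⟨isAtom_flat_loops, F.2.loops_subset⟩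
    rcases w with K | H
    · exact absurd hloops not_flat_le_indep
    · intro e heF
      by_cases he : M.IsLoop e
      · exact hloops he
      · simpa using hnonloop (M.isNonloop_of_not_isLoop (F.2.subset_ground heF) he)
          (by simpa using heF)

lemma encard_le_height_indep {I : Set α} (hI : M.Indep I) (hfin : I.Finite) :
    I.encard ≤ height (indep ⟨I, hI⟩ : TildeL M) := by
  induction I, hfin using Set.Finite.induction_on with
  | empty => simp
  | @insert e J heJ _ ih =>
    calc (insert e J).encard = J.encard + 1 := encard_insert_of_notMem heJ
      _ ≤ height (indep ⟨J, hI.subset (subset_insert e J)⟩ : TildeL M) + 1 := by gcongr; exact ih _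
      _ ≤ _ := height_add_one_le (indep_lt_indep.2 (ssubset_insert heJ))

section Finite

variable [Finite α]

noncomputable def rk : TildeL M → ℕ∞
  | indep I => I.1.encard
  | flat F => M.eRk F.1 + 1

lemma rk_strictMono : StrictMono (rk : TildeL M → ℕ∞) := by
  rintro (I | F) (J | G) hlt
  · exact (toFinite _).encard_lt_encard (indep_lt_indep.1 hlt)
  · exact (ENat.lt_add_one_iff (M.eRk_ne_top_of_finite (toFinite _))).2
      (I.2.encard_le_eRk_of_subset (indep_lt_flat.1 hlt))
  · exact absurd hlt.le not_flat_le_indep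
  · exact (ENat.add_lt_add_iff_right ENat.one_ne_top).2 (F.2.eRk_lt_eRk_of_ssubset (flat_lt_flat.1 hlt)
      G.2.subset_ground (M.eRk_ne_top_of_finite (toFinite _)))

lemma height_le_rk (x : TildeL M) : height x ≤ rk x := by
  simpa using height_le_height_apply_of_strictMono _ rk_strictMono x

lemma height_indep (I : {I : Set α // M.Indep I}) : height (indep I) = I.1.encard :=
  (height_le_rk _).antisymm (encard_le_height_indep I.2 (toFinite _))

lemma height_flat (F : {F : Set α // M.IsFlat F}) : height (flat F) = M.eRk F.1 + 1 := by
  refine (height_le_rk _).antisymm ?_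
  obtain ⟨B, hB⟩ := M.exists_isBasis F.1 F.2.subset_ground
  calc M.eRk F.1 + 1 = height (indep ⟨B, hB.indep⟩ : TildeL M) + 1 := by
        rw [height_indep, hB.encard_eq_eRk]
    _ ≤ height (flat F) := height_add_one_le (indep_lt_flat.2 hB.subset)

lemma height_sup_add_height_inf_le (x y : TildeL M) :
    height (x ⊔ y) + height (x ⊓ y) ≤ height x + height y := by
  have mixed (I : {I : Set α // M.Indep I}) (G : {F : Set α // M.IsFlat F}) :
      height (indep I ⊔ flat G) + height (indep I ⊓ flat G) ≤ height (indep I) + height (flat G) := by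
    change height (flat ⟨M.closure (I.1 ∪ G.1), _⟩) + height (indep ⟨I.1 ∩ G.1, _⟩) ≤ _
    rw [height_flat, height_indep, height_indep, height_flat, ← I.2.eRk_eq_encard,
      ← (I.2.subset inter_subset_left).eRk_eq_encard]
    convert add_le_add_right (M.eRk_closure_union_add_eRk_inter_le I.1 G.1) 1 using 1 <;> ring
  rcases x with I | F <;> rcases y with J | G
  · change height (join _ _) + height (indep ⟨I.1 ∩ J.1, _⟩) ≤ _
    by_cases hIJ : M.Indep (I.1 ∪ J.1)
    · rw [join_indep_indep_of_indep hIJ, height_indep, height_indep, height_indep, height_indep]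
      exact (encard_union_add_encard_inter _ _).le
    · rw [join_indep_indep_of_not_indep hIJ, height_flat, height_indep, height_indep, height_indep]
      have hdep : M.Dep (I.1 ∪ J.1) :=
        Matroid.dep_of_not_indep hIJ (union_subset I.2.subset_ground J.2.subset_ground)
      calc M.eRk (M.closure (I.1 ∪ J.1)) + 1 + (I.1 ∩ J.1).encard
          ≤ (I.1 ∪ J.1).encard + (I.1 ∩ J.1).encard := by
            rw [M.eRk_closure_eq]
            gcongr
            exact Order.add_one_le_of_lt (M.eRk_lt_encard_of_dep_of_finite (toFinite _) hdep)
        _ = I.1.encard + J.1.encard := encard_union_add_encard_inter _ _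
  · exact mixed I G
  · have hJF := mixed J F
    rwa [sup_comm, inf_comm, add_comm (height (indep J))] at hJF
  · change height (flat ⟨M.closure (F.1 ∪ G.1), _⟩) + height (flat ⟨F.1 ∩ G.1, _⟩) ≤ _
    simp only [height_flat]
    convert add_le_add_right (add_le_add_right (M.eRk_closure_union_add_eRk_inter_le F.1 G.1) 1) 1
      using 1 <;> ring

end Finite

end TildeL

/-- `L̃(M)` is a geometric lattice: it is a lattice (all pairwise joins and
meets exist), it is atomic (every element is the least upper bound of the atoms
below it), and its rank function (the order-theoretic height) is upper
semimodular. -/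
theorem tildeL_geometric [Fintype α] (M : Matroid α) :
    (∀ x y : TildeL M, (∃ z, IsLUB {x, y} z) ∧ (∃ z, IsGLB {x, y} z)) ∧
    (∀ x : TildeL M, IsLUB {a | IsAtom a ∧ a ≤ x} x) ∧
    (∀ x y s j : TildeL M, IsGLB {x, y} s → IsLUB {x, y} j →
      Order.height j + Order.height s ≤ Order.height x + Order.height y) := by
  refine ⟨fun x y ↦ ⟨⟨_, isLUB_pair⟩, ⟨_, isGLB_pair⟩⟩, TildeL.isLUB_atoms, ?_⟩
  intro x y s j hs hj
  rw [hs.unique isGLB_pair, hj.unique isLUB_pair]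
  exact TildeL.height_sup_add_height_inf_le x y
end

section
/- In the lattice L̃(M) associated to a matroid M, the set G̃ consisting of all singleton independent sets {i} (for non-loop i) together with all starred flats F_* is a building set, and a subset N ⊆ G̃ is nested if and only if N = {{i} : i ∈ I} ∪ {F_* : F ∈ 𝓕} for some independent set I of M and some chain (flag) 𝓕 of flats of M with I ⊆ min(𝓕). -/
open scoped Classical

variable {α : Type*}

/-- The set `G̃ ⊆ L̃(M)` of all singleton independent sets (non-loops) together
with all starred flats. -/
def tildeG (M : Matroid α) : Set (TildeL M) :=
  {x | (∃ i, ∃ h : M.Indep {i}, x = Sum.inl ⟨{i}, h⟩) ∨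
       (∃ F, ∃ h : M.IsFlat F, x = Sum.inr ⟨F, h⟩)}

/-- The maximal elements of `𝒢` lying below `X`. -/
def maxBelow {L : Type*} [PartialOrder L] (𝒢 : Set L) (X : L) : Type _ :=
  {G : L // G ∈ 𝒢 ∧ G ≤ X ∧ ∀ G' ∈ 𝒢, G' ≤ X → G ≤ G' → G' = G}

/-- `𝒢` is a building set of the bounded-below poset `L`: for every `X > ⊥`,
with `max 𝒢_{≤X} = {G_1, …, G_k}`, there is an isomorphism of posets
`∏_i [⊥, G_i] ≅ [⊥, X]` sending the tuple which is `G_i` in coordinate `i`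
and `⊥` elsewhere to `G_i`. -/
def IsBuildingSet {L : Type*} [PartialOrder L] [OrderBot L] (𝒢 : Set L) : Prop :=
  (⊥ ∉ 𝒢) ∧ ∀ X : L, ⊥ < X →
    ∃ e : (∀ G : maxBelow 𝒢 X, Set.Icc (⊥ : L) G.1) ≃o Set.Icc (⊥ : L) X,
      ∀ G : maxBelow 𝒢 X,
        ((e (fun H => if H = G then ⟨H.1, bot_le, le_rfl⟩ else ⟨⊥, le_rfl, bot_le⟩) : L)
          = G.1)

/-- `N ⊆ 𝒢` is nested: for any pairwise incomparable `G_1, …, G_t ∈ N` with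
`t ≥ 2`, the join `G_1 ∨ ⋯ ∨ G_t` is not in `𝒢`. -/
def IsNested {L : Type*} [PartialOrder L] (𝒢 : Set L) (N : Set L) : Prop :=
  N ⊆ 𝒢 ∧ ∀ T : Finset L, ↑T ⊆ N → 2 ≤ T.card →
    (∀ x ∈ T, ∀ y ∈ T, x ≠ y → ¬ x ≤ y ∧ ¬ y ≤ x) →
    ∀ s, IsLUB (T : Set L) s → s ∉ 𝒢

/-!
Below a starred flat `F_*` the only maximal element of `G̃` is `F_*` itself. Below an independent
set `I` the maximal elements of `G̃` are the singletons `{i}`, `i ∈ I`, each with two-element lower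
interval, and `[0̂, I]`, the Boolean lattice on `I`, is the product of these intervals.

If some elements of `L̃(M)` have no independent set above them, their join is the starred closure
of their union, which lies in `G̃`. In a nested set this makes any two starred flats comparable,
puts every singleton below every starred flat, and makes the singletons span an independent set.
Conversely, in `{{i} : i ∈ I} ∪ {F_* : F ∈ 𝓕}` a starred flat is comparable to everything, so an
antichain of size at least two consists of singletons of `I`; their join is the independent set
they span, which is not a singleton.
-/

def OrderIso.piUnique {ι : Type*} [Unique ι] (β : ι → Type*) [∀ i, LE (β i)] :
    (∀ i, β i) ≃o β default where
  toEquiv := Equiv.piUnique β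
  map_rel_iff' := by simp [Pi.le_def, Unique.forall_iff]

section Building

variable {L : Type*} [PartialOrder L] {𝒢 : Set L} {X : L}

lemma maxBelow.eq_of_le {G G' : maxBelow 𝒢 X} (h : G.1 ≤ G'.1) : G = G' :=
  Subtype.ext (G.2.2.2 _ G'.2.1 G'.2.2.1 h).symm

theorem exists_buildingIso_of_mem [OrderBot L] (hX : X ∈ 𝒢) :
    ∃ e : (∀ G : maxBelow 𝒢 X, Set.Icc (⊥ : L) G.1) ≃o Set.Icc (⊥ : L) X,
      ∀ G : maxBelow 𝒢 X,
        ((e (fun H => if H = G then ⟨H.1, bot_le, le_rfl⟩ else ⟨⊥, le_rfl, bot_le⟩) : L)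
          = G.1) := by
  let _ : Unique (maxBelow 𝒢 X) :=
    { default := ⟨X, hX, le_rfl, fun _ _ h h' => le_antisymm h h'⟩
      uniq := fun G => maxBelow.eq_of_le G.2.2.1 }
  refine ⟨OrderIso.piUnique _, fun G => ?_⟩
  obtain rfl := Subsingleton.elim G default
  exact congrArg Subtype.val (if_pos rfl)

lemma IsNested.le_or_le_of_isLUB_pair {N : Set L} (hN : IsNested 𝒢 N) {x y s : L} (hx : x ∈ N)
    (hy : y ∈ N) (hs : IsLUB {x, y} s) (hs𝒢 : s ∈ 𝒢) : x ≤ y ∨ y ≤ x := by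
  by_contra! h
  have hxy : x ≠ y := by
    rintro rfl
    exact h.1 le_rfl
  refine hN.2 {x, y} (by simp [Set.insert_subset_iff, hx, hy]) (Finset.card_pair hxy).ge ?_ s
    (by simpa using hs) hs𝒢
  simp only [Finset.mem_insert, Finset.mem_singleton]
  rintro a (rfl | rfl) b (rfl | rfl) hab
  exacts [(hab rfl).elim, h, h.symm, (hab rfl).elim]

end Building

namespace TildeL

variable {M : Matroid α}

def carrier : TildeL M → Set α
  | .inl I => I.1
  | .inr F => F.1

instance [Finite α] : Finite (TildeL M) :=
  inferInstanceAs (Finite (_ ⊕ _))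

lemma carrier_mono : ∀ {x y : TildeL M}, x ≤ y → x.carrier ⊆ y.carrier
  | .inl _, .inl _, h | .inl _, .inr _, h | .inr _, .inr _, h => h
  | .inr _, .inl _, h => h.elim

lemma carrier_subset_ground : ∀ x : TildeL M, x.carrier ⊆ M.E
  | .inl I => I.2.subset_ground
  | .inr F => F.2.subset_ground

lemma le_inr_iff {F : {F : Set α // M.IsFlat F}} : ∀ {x : TildeL M},
    x ≤ Sum.inr F ↔ x.carrier ⊆ F.1
  | .inl _ | .inr _ => Iff.rfl

lemma eq_inl_carrier_of_le_inl {J : {I : Set α // M.Indep I}} :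
    ∀ {x : TildeL M} (h : x ≤ Sum.inl J), x = Sum.inl ⟨x.carrier, J.2.subset (carrier_mono h)⟩
  | .inl _, _ => rfl
  | .inr _, h => h.elim

lemma bot_notMem_tildeG : (⊥ : TildeL M) ∉ tildeG M := by
  rintro (⟨i, _, h⟩ | ⟨F, _, h⟩)
  · exact Set.singleton_ne_empty i (congrArg carrier h).symm
  · exact Sum.inl_ne_inr h

lemma exists_eq_singleton_of_mem_tildeG_of_le_inl {x : TildeL M} (hx : x ∈ tildeG M)
    {J : {I : Set α // M.Indep I}} (h : x ≤ Sum.inl J) :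
    ∃ i ∈ J.1, ∃ hi : M.Indep {i}, x = Sum.inl ⟨{i}, hi⟩ := by
  rcases hx with ⟨i, hi, rfl⟩ | ⟨F, hF, rfl⟩
  · exact ⟨i, Set.singleton_subset_iff.1 h, hi, rfl⟩
  · exact h.elim

lemma eq_of_mem_tildeG_of_le_singleton {x : TildeL M} (hx : x ∈ tildeG M) {i : α}
    {hi : M.Indep {i}} (h : x ≤ Sum.inl ⟨{i}, hi⟩) : x = Sum.inl ⟨{i}, hi⟩ := by
  obtain ⟨j, hj, -, rfl⟩ := exists_eq_singleton_of_mem_tildeG_of_le_inl hx h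
  obtain rfl : j = i := hj
  rfl

@[simp] lemma carrier_bot : (⊥ : TildeL M).carrier = ∅ := rfl

lemma le_iff_carrier_subset_of_le_inl {J : {I : Set α // M.Indep I}} {x : TildeL M}
    (hx : x ≤ Sum.inl J) {y : TildeL M} : x ≤ y ↔ x.carrier ⊆ y.carrier := by
  rw [eq_inl_carrier_of_le_inl hx]
  cases y <;> rfl

section Inl

variable (J : {I : Set α // M.Indep I})

lemma exists_eq_singleton_of_maxBelow (G : maxBelow (tildeG M) (Sum.inl J)) :
    ∃ i ∈ J.1, ∃ hi : M.Indep {i}, G.1 = Sum.inl ⟨{i}, hi⟩ :=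
  exists_eq_singleton_of_mem_tildeG_of_le_inl G.2.1 G.2.2.1

def maxBelowSingleton {i : α} (hi : i ∈ J.1) : maxBelow (tildeG M) (Sum.inl J) :=
  ⟨Sum.inl ⟨{i}, J.2.subset (Set.singleton_subset_iff.2 hi)⟩, Or.inl ⟨i, _, rfl⟩,
    Set.singleton_subset_iff.2 hi, fun _ hG' hG'J hle => by
      obtain ⟨j, _, _, rfl⟩ := exists_eq_singleton_of_mem_tildeG_of_le_inl hG' hG'J
      obtain rfl : i = j := hle rfl
      rfl⟩

lemma eq_bot_or_eq_of_le_maxBelow (G : maxBelow (tildeG M) (Sum.inl J)) {z : TildeL M}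
    (hz : z ≤ G.1) : z = ⊥ ∨ z = G.1 := by
  obtain ⟨i, -, hi, hG⟩ := exists_eq_singleton_of_maxBelow J G
  rw [hG] at hz ⊢
  rw [eq_inl_carrier_of_le_inl hz]
  rcases Set.subset_singleton_iff_eq.1 (carrier_mono hz) with h | h
  · exact Or.inl (congrArg Sum.inl (Subtype.ext h))
  · exact Or.inr (congrArg Sum.inl (Subtype.ext h))

def unionCarrier (f : ∀ G : maxBelow (tildeG M) (Sum.inl J), Set.Icc ⊥ G.1) : Set α :=
  ⋃ G, (f G).1.carrier

lemma unionCarrier_subset (f : ∀ G : maxBelow (tildeG M) (Sum.inl J), Set.Icc ⊥ G.1) :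
    unionCarrier J f ⊆ J.1 :=
  Set.iUnion_subset fun G => carrier_mono ((f G).2.2.trans G.2.2.1)

lemma subset_unionCarrier_iff (f : ∀ G : maxBelow (tildeG M) (Sum.inl J), Set.Icc ⊥ G.1)
    (G : maxBelow (tildeG M) (Sum.inl J)) :
    G.1.carrier ⊆ unionCarrier J f ↔ (f G).1 = G.1 := by
  obtain ⟨i, -, hi, hG⟩ := exists_eq_singleton_of_maxBelow J G
  have hGi : G.1.carrier = {i} := by rw [hG]; rfl
  rw [hGi, Set.singleton_subset_iff]
  refine ⟨fun h => ?_, fun h => Set.mem_iUnion.2 ⟨G, by rw [h, hGi]; rfl⟩⟩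
  obtain ⟨G', hiG'⟩ := Set.mem_iUnion.1 h
  rcases eq_bot_or_eq_of_le_maxBelow J G' (f G').2.2 with hbot | htop
  · rw [hbot] at hiG'
    exact hiG'.elim
  · rw [htop] at hiG'
    have hGG' : G = G' := maxBelow.eq_of_le <|
      (le_iff_carrier_subset_of_le_inl G.2.2.1).2 (hGi ▸ Set.singleton_subset_iff.2 hiG')
    exact hGG' ▸ htop

def toIccInl (f : ∀ G : maxBelow (tildeG M) (Sum.inl J), Set.Icc ⊥ G.1) :
    Set.Icc (⊥ : TildeL M) (Sum.inl J) :=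
  ⟨Sum.inl ⟨unionCarrier J f, J.2.subset (unionCarrier_subset J f)⟩, bot_le,
    unionCarrier_subset J f⟩

lemma toIccInl_eq_iff (f : ∀ G : maxBelow (tildeG M) (Sum.inl J), Set.Icc ⊥ G.1)
    {y : TildeL M} (hy : y ≤ Sum.inl J) : (toIccInl J f).1 = y ↔ unionCarrier J f = y.carrier := by
  rw [eq_inl_carrier_of_le_inl hy]
  exact ⟨fun h => congrArg carrier h, fun h => congrArg Sum.inl (Subtype.ext h)⟩

noncomputable def ofIccInl (y : Set.Icc (⊥ : TildeL M) (Sum.inl J))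
    (G : maxBelow (tildeG M) (Sum.inl J)) : Set.Icc ⊥ G.1 :=
  if G.1.carrier ⊆ y.1.carrier then ⟨G.1, bot_le, le_rfl⟩ else ⟨⊥, le_rfl, bot_le⟩

lemma coe_ofIccInl_of_subset {y : Set.Icc (⊥ : TildeL M) (Sum.inl J)}
    {G : maxBelow (tildeG M) (Sum.inl J)} (h : G.1.carrier ⊆ y.1.carrier) :
    (ofIccInl J y G).1 = G.1 := by
  simp [ofIccInl, h]

lemma coe_ofIccInl_of_not_subset {y : Set.Icc (⊥ : TildeL M) (Sum.inl J)}
    {G : maxBelow (tildeG M) (Sum.inl J)} (h : ¬ G.1.carrier ⊆ y.1.carrier) :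
    (ofIccInl J y G).1 = ⊥ := by
  simp [ofIccInl, h]

noncomputable def piIccOrderIsoIccInl :
    (∀ G : maxBelow (tildeG M) (Sum.inl J), Set.Icc ⊥ G.1) ≃o Set.Icc (⊥ : TildeL M) (Sum.inl J) :=
  Equiv.toOrderIso
    { toFun := toIccInl J
      invFun := ofIccInl J
      left_inv := fun f => funext fun G => Subtype.ext <| by
        by_cases h : (f G).1 = G.1
        · exact (coe_ofIccInl_of_subset J ((subset_unionCarrier_iff J f G).2 h)).trans h.symm
        · rw [coe_ofIccInl_of_not_subset J (mt (subset_unionCarrier_iff J f G).1 h)]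
          exact ((eq_bot_or_eq_of_le_maxBelow J G (f G).2.2).resolve_right h).symm
      right_inv := fun y => Subtype.ext <| (toIccInl_eq_iff J _ y.2.2).2 <| by
        refine subset_antisymm (Set.iUnion_subset fun G => ?_) fun a ha => ?_
        · by_cases h : G.1.carrier ⊆ y.1.carrier
          · rwa [coe_ofIccInl_of_subset J h]
          · rw [coe_ofIccInl_of_not_subset J h]
            exact Set.empty_subset _
        · have haJ := carrier_mono y.2.2 ha
          refine Set.mem_iUnion.2 ⟨maxBelowSingleton J haJ, ?_⟩
          rw [coe_ofIccInl_of_subset J (G := maxBelowSingleton J haJ)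
            (Set.singleton_subset_iff.2 ha)]
          rfl }
    (fun _ _ h => Set.iUnion_mono fun G => carrier_mono (h G))
    (fun y y' h G => by
      change (ofIccInl J y G).1 ≤ (ofIccInl J y' G).1
      by_cases hy : G.1.carrier ⊆ y.1.carrier
      · rw [coe_ofIccInl_of_subset J hy, coe_ofIccInl_of_subset J (hy.trans (carrier_mono h))]
      · rw [coe_ofIccInl_of_not_subset J hy]
        exact bot_le)

lemma piIccOrderIsoIccInl_single (G : maxBelow (tildeG M) (Sum.inl J)) :
    ((piIccOrderIsoIccInl J
        (fun H => if H = G then ⟨H.1, bot_le, le_rfl⟩ else ⟨⊥, le_rfl, bot_le⟩) : TildeL M)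
      = G.1) := by
  refine (toIccInl_eq_iff J _ G.2.2.1).2 (subset_antisymm (Set.iUnion_subset fun H => ?_)
    (Set.subset_iUnion_of_subset G ?_))
  · by_cases h : H = G
    · subst h; simp
    · simp [h]
  · simp

end Inl

theorem isBuildingSet_tildeG : IsBuildingSet (tildeG M) := by
  refine ⟨bot_notMem_tildeG, fun X _ => ?_⟩
  rcases X with J | F
  · exact ⟨piIccOrderIsoIccInl J, piIccOrderIsoIccInl_single J⟩
  · exact exists_buildingIso_of_mem (Or.inr ⟨F.1, F.2, rfl⟩)

lemma isLUB_inr_closure {T : Set (TildeL M)} (hT : ∀ J, Sum.inl J ∉ upperBounds T) :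
    IsLUB T (Sum.inr ⟨M.closure (⋃ x ∈ T, x.carrier), M.isFlat_closure _⟩) := by
  have hE : ⋃ x ∈ T, x.carrier ⊆ M.E := Set.iUnion₂_subset fun x _ => x.carrier_subset_ground
  refine ⟨fun x hx => le_inr_iff.2 ((Set.subset_biUnion_of_mem hx).trans (M.subset_closure _ hE)),
    fun y hy => ?_⟩
  rcases y with J | F
  · exact (hT J hy).elim
  · exact (M.closure_subset_closure (Set.iUnion₂_subset fun x hx => le_inr_iff.1 (hy hx))).trans
      F.2.closure.subset

def singletonsOf (N : Set (TildeL M)) : Set α :=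
  {i | ∃ h : M.Indep {i}, Sum.inl ⟨{i}, h⟩ ∈ N}

def flatsOf (N : Set (TildeL M)) : Set (Set α) :=
  {F | ∃ h : M.IsFlat F, Sum.inr ⟨F, h⟩ ∈ N}

variable (M) in
def nestedSet (I : Set α) (𝓕 : Set (Set α)) : Set (TildeL M) :=
  {x | (∃ i ∈ I, ∃ h : M.Indep {i}, x = Sum.inl ⟨{i}, h⟩) ∨
       (∃ F ∈ 𝓕, ∃ h : M.IsFlat F, x = Sum.inr ⟨F, h⟩)}

lemma nestedSet_singletonsOf_flatsOf {N : Set (TildeL M)} (hN : N ⊆ tildeG M) :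
    nestedSet M (singletonsOf N) (flatsOf N) = N := by
  ext x
  refine ⟨?_, fun hx => ?_⟩
  · rintro (⟨i, ⟨_, hi⟩, _, rfl⟩ | ⟨F, ⟨_, hF⟩, _, rfl⟩) <;> assumption
  · rcases hN hx with ⟨i, h, rfl⟩ | ⟨F, h, rfl⟩
    exacts [Or.inl ⟨i, ⟨h, hx⟩, h, rfl⟩, Or.inr ⟨F, ⟨h, hx⟩, h, rfl⟩]

lemma nestedSet_subset_tildeG (I : Set α) (𝓕 : Set (Set α)) : nestedSet M I 𝓕 ⊆ tildeG M := by
  rintro x (⟨i, -, h, rfl⟩ | ⟨F, -, h, rfl⟩)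
  exacts [Or.inl ⟨i, h, rfl⟩, Or.inr ⟨F, h, rfl⟩]

lemma le_or_le_of_mem_nestedSet {I : Set α} {𝓕 : Set (Set α)} (h𝓕 : IsChain (· ⊆ ·) 𝓕)
    (hI𝓕 : ∀ F ∈ 𝓕, I ⊆ F) {x y : TildeL M} (hx : x ∈ nestedSet M I 𝓕)
    (hy : y ∈ nestedSet M I 𝓕) (hx' : Sum.isRight x) : x ≤ y ∨ y ≤ x := by
  obtain ⟨i, _, _, rfl⟩ | ⟨F, hF, _, rfl⟩ := hx
  · exact (Bool.false_ne_true hx').elim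
  obtain ⟨j, hj, _, rfl⟩ | ⟨G, hG, _, rfl⟩ := hy
  · exact Or.inr (Set.singleton_subset_iff.2 (hI𝓕 F hF hj))
  · exact h𝓕.total hF hG

theorem isNested_nestedSet {I : Set α} {𝓕 : Set (Set α)} (hI : M.Indep I)
    (h𝓕 : IsChain (· ⊆ ·) 𝓕) (hI𝓕 : ∀ F ∈ 𝓕, I ⊆ F) : IsNested (tildeG M) (nestedSet M I 𝓕) := by
  refine ⟨nestedSet_subset_tildeG I 𝓕, fun T hTN hcard hanti s hs hsG => ?_⟩
  have hT : ∀ x ∈ T, ∃ i ∈ I, ∃ h : M.Indep {i}, x = Sum.inl ⟨{i}, h⟩ := by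
    refine fun x hx => (hTN hx).resolve_right fun hxF => ?_
    obtain ⟨y, hy, hyx⟩ := T.exists_mem_ne hcard x
    have hx' : Sum.isRight x := by
      obtain ⟨F, -, -, rfl⟩ := hxF
      rfl
    have := hanti y hy x hx hyx
    rcases le_or_le_of_mem_nestedSet h𝓕 hI𝓕 (hTN hx) (hTN hy) hx' with h | h
    exacts [this.2 h, this.1 h]
  have hsI : s ≤ Sum.inl ⟨I, hI⟩ := hs.2 fun x hx => by
    obtain ⟨i, hi, -, rfl⟩ := hT x hx
    exact Set.singleton_subset_iff.2 hi
  obtain ⟨k, -, hk, rfl⟩ := exists_eq_singleton_of_mem_tildeG_of_le_inl hsG hsI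
  have hTk : ∀ x ∈ T, x = Sum.inl ⟨{k}, hk⟩ := fun x hx =>
    eq_of_mem_tildeG_of_le_singleton (nestedSet_subset_tildeG I 𝓕 (hTN hx)) (hs.1 hx)
  have := Finset.card_le_one.2 fun a ha b hb => (hTk a ha).trans (hTk b hb).symm
  omega

end TildeL

open TildeL

section Nested

variable {M : Matroid α}

lemma IsNested.le_or_le_of_isRight {N : Set (TildeL M)} (hN : IsNested (tildeG M) N)
    {x y : TildeL M} (hx : x ∈ N) (hy : y ∈ N) (hy' : Sum.isRight y) : x ≤ y ∨ y ≤ x := by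
  refine hN.le_or_le_of_isLUB_pair hx hy (isLUB_inr_closure fun J hJ => ?_) (Or.inr ⟨_, _, rfl⟩)
  have hyJ : y ≤ Sum.inl J := hJ (Set.mem_insert_of_mem _ rfl)
  rcases y with _ | _
  exacts [Bool.false_ne_true hy', hyJ]

lemma IsNested.isChain_flatsOf {N : Set (TildeL M)} (hN : IsNested (tildeG M) N) :
    IsChain (· ⊆ ·) (flatsOf N) :=
  fun _ ⟨_, hF⟩ _ ⟨_, hG⟩ _ => hN.le_or_le_of_isRight hF hG rfl

lemma IsNested.singletonsOf_subset {N : Set (TildeL M)} (hN : IsNested (tildeG M) N) {F : Set α}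
    (hF : F ∈ flatsOf N) : singletonsOf N ⊆ F := fun _ ⟨_, hi⟩ =>
  (hN.le_or_le_of_isRight hi hF.2 rfl).resolve_right id rfl

lemma IsNested.indep_singletonsOf [Finite α] {N : Set (TildeL M)} (hN : IsNested (tildeG M) N) :
    M.Indep (singletonsOf N) := by
  by_contra hdep
  obtain ⟨i, ⟨hi, hiN⟩, j, ⟨hj, hjN⟩, hij⟩ : (singletonsOf N).Nontrivial := by
    refine Set.not_subsingleton_iff.1 fun hsub => hdep ?_
    obtain h | ⟨i, h⟩ := hsub.eq_empty_or_singleton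
    · exact h ▸ M.empty_indep
    · obtain ⟨hi, -⟩ : i ∈ singletonsOf N := h ▸ rfl
      exact h ▸ hi
  let S : Set (TildeL M) := {x ∈ N | ∃ i, ∃ h : M.Indep {i}, x = Sum.inl ⟨{i}, h⟩}
  have hS := Set.toFinite S
  have hlub := isLUB_inr_closure (T := S) fun J hJ =>
    hdep (J.2.subset fun i ⟨hi, hiN⟩ => hJ ⟨hiN, i, hi, rfl⟩ rfl)
  rw [← hS.coe_toFinset] at hlub
  refine hN.2 hS.toFinset (by simp [S]) ?_ ?_ _ hlub (Or.inr ⟨_, _, rfl⟩)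
  · refine Finset.one_lt_card.2 ⟨_, hS.mem_toFinset.2 ⟨hiN, i, hi, rfl⟩, _,
      hS.mem_toFinset.2 ⟨hjN, j, hj, rfl⟩, fun h => hij ?_⟩
    exact Set.singleton_eq_singleton_iff.1 (congrArg carrier h)
  · simp only [hS.mem_toFinset]
    rintro _ ⟨-, a, _, rfl⟩ _ ⟨-, b, _, rfl⟩ hab
    have hab' : a ≠ b := by
      rintro rfl
      exact hab rfl
    exact ⟨fun h => hab' (h rfl), fun h => hab' (h rfl).symm⟩

end Nested

/-- `G̃` is a building set of `L̃(M)`, and a subset `N ⊆ G̃` is nested if and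
only if `N = {{i} : i ∈ I} ∪ {F_* : F ∈ 𝓕}` for some independent set `I` and
some chain of flats `𝓕` with `I` contained in every member of `𝓕` (i.e.
`I ⊆ min 𝓕`). -/
theorem tildeG_building_and_nested [Fintype α] (M : Matroid α) :
    IsBuildingSet (tildeG M) ∧
    ∀ N ⊆ tildeG M,
      (IsNested (tildeG M) N ↔
        ∃ (I : Set α) (𝓕 : Set (Set α)),
          M.Indep I ∧ (∀ F ∈ 𝓕, M.IsFlat F) ∧ IsChain (· ⊆ ·) 𝓕 ∧
          (∀ F ∈ 𝓕, I ⊆ F) ∧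
          N = {x | (∃ i ∈ I, ∃ h : M.Indep {i}, x = Sum.inl ⟨{i}, h⟩) ∨
                   (∃ F ∈ 𝓕, ∃ h : M.IsFlat F, x = Sum.inr ⟨F, h⟩)}) := by
  refine ⟨isBuildingSet_tildeG, fun N hN => ⟨fun hnest => ?_, ?_⟩⟩
  · exact ⟨singletonsOf N, flatsOf N, hnest.indep_singletonsOf, fun F hF => hF.1,
      hnest.isChain_flatsOf, fun F hF => hnest.singletonsOf_subset hF,
      (nestedSet_singletonsOf_flatsOf hN).symm⟩
  · rintro ⟨I, 𝓕, hI, -, h𝓕, hI𝓕, rfl⟩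
    exact isNested_nestedSet hI h𝓕 hI𝓕
end
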